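/- arXiv:2311.15871 — 8 statements merged into one kernel-verified Lean document; each statement's English description precedes it below -/
import Mathlib

section
/- Suppose Z is independent of Y0 and of Y1, Condition S1 holds, and 0 < p(z_ℓ) < 1 for every ℓ. Let γ = (γ_1,...,γ_L) and γ̃ = (γ̃_1,...,γ̃_L) belong to Γ and suppose that for every y ∈ ℝ: P[Y ≤ y | D=1] ≤ Σ_{ℓ=1}^L γ_ℓ P[Y ≤ y, D=1 | Z=z_ℓ] and Σ_{ℓ=1}^L γ̃_ℓ P[Y ≤ y, D=1 | Z=z_ℓ] ≤ P[Y ≤ y | D=1]. Then for every y ∈ ℝ: −Σ_{ℓ=1}^L γ̃_ℓ P[Y ≤ y, D=0 | Z=z_ℓ] ≤ P[Y0 ≤ y | D=1] ≤ −Σ_{ℓ=1}^L γ_ℓ P[Y ≤ y, D=0 | Z=z_ℓ]. -/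
open MeasureTheory ProbabilityTheory Filter Set

noncomputable def pr {Ω : Type*} [MeasurableSpace Ω] (μ : Measure Ω) (s : Set Ω) : ℝ :=
  (μ s).toReal

noncomputable def cpr {Ω : Type*} [MeasurableSpace Ω] (μ : Measure Ω) (s A : Set Ω) : ℝ :=
  pr μ (s ∩ A) / pr μ A

/-!
Write `F₁ y ℓ = P[Y₁ ≤ y | D = 1, Z = ℓ]`, `F₀ y ℓ = P[Y₀ ≤ y | D = 1, Z = ℓ]` and
`π ℓ = P[Z = ℓ | D = 1]`. Since `Y = Y₁` on `{D = 1}`, the law of total probability gives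
`P[Y ≤ y | D = 1] = ∑ π ℓ F₁ y ℓ` and `P[Y ≤ y, D = 1 | Z = ℓ] = p ℓ F₁ y ℓ`, so the rank
conditions compare mixtures of the `F₁ · ℓ` with the weights `π` and `γ p`, both summing to one.
Condition S₁, which extends from probability weights to such signed weights, transfers the
comparison to the `F₀ · ℓ`. Independence of `Z` and `Y₀` gives
`p ℓ F₀ y ℓ = P[Y₀ ≤ y] - P[Y ≤ y, D = 0 | Z = ℓ]`, and `∑ γ = 0` removes the unidentified
`P[Y₀ ≤ y]`.
-/

open Finset in
theorem Finset.sum_mul_eq_neg_sum_mul_of_add_eq_const {ι : Type*} (s : Finset ι)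
    {a b c : ι → ℝ} {K : ℝ} (hc : ∑ i ∈ s, c i = 0) (hab : ∀ i ∈ s, a i + b i = K) :
    ∑ i ∈ s, c i * a i = -∑ i ∈ s, c i * b i := by
  rw [eq_neg_iff_add_eq_zero, ← sum_add_distrib]
  calc ∑ i ∈ s, (c i * a i + c i * b i) = ∑ i ∈ s, c i * K :=
        sum_congr rfl fun i hi => by rw [← mul_add, hab i hi]
    _ = 0 := by rw [← sum_mul, hc, zero_mul]

def MixtureLE {α ι : Type*} [Fintype ι] (F : α → ι → ℝ) (w w' : ι → ℝ) : Prop :=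
  ∀ y, ∑ i, w i * F y i ≤ ∑ i, w' i * F y i

namespace MixtureLE

variable {α ι : Type*} [Fintype ι]

theorem shift_div_iff (F : α → ι → ℝ) (w w' : ι → ℝ) (M : ℝ) {s : ℝ} (hs : 0 < s) :
    MixtureLE F (fun i => (w i + M) / s) (fun i => (w' i + M) / s) ↔ MixtureLE F w w' := by
  have hsum : ∀ (v : ι → ℝ) (y : α),
      ∑ i, (v i + M) / s * F y i = (∑ i, v i * F y i + M * ∑ i, F y i) / s := by
    intro v y
    rw [Finset.mul_sum, ← Finset.sum_add_distrib, Finset.sum_div]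
    exact Finset.sum_congr rfl fun i _ => by ring
  simp only [MixtureLE, hsum, div_le_div_iff_of_pos_right hs, add_le_add_iff_right]

/-- Shifting both weight vectors by a common constant and rescaling makes them probability
weights without changing the sign of the difference of the mixtures. -/
theorem of_transfer_nonneg {F G : α → ι → ℝ}
    (hFG : ∀ w w' : ι → ℝ, (∀ i, 0 ≤ w i) → (∀ i, 0 ≤ w' i) →
      ∑ i, w i = 1 → ∑ i, w' i = 1 → MixtureLE F w w' → MixtureLE G w w')
    {a b : ι → ℝ} (ha : ∑ i, a i = 1) (hb : ∑ i, b i = 1) (h : MixtureLE F a b) :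
    MixtureLE G a b := by
  set M := ∑ i, (|a i| + |b i|)
  have hM : ∀ i, |a i| + |b i| ≤ M := fun i =>
    Finset.single_le_sum (f := fun i => |a i| + |b i|) (fun j _ => by positivity)
      (Finset.mem_univ i)
  have hM0 : 0 ≤ M := Finset.sum_nonneg fun i _ => by positivity
  set s := 1 + Fintype.card ι * M
  have hs : 0 < s := by positivity
  have hnonneg : ∀ v : ι → ℝ, (∀ i, |v i| ≤ M) → ∀ i, 0 ≤ (v i + M) / s := fun v hv i =>
    div_nonneg (by linarith [neg_abs_le (v i), hv i]) hs.le
  have hone : ∀ v : ι → ℝ, ∑ i, v i = 1 → ∑ i, (v i + M) / s = 1 := fun v hv => by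
    rw [← Finset.sum_div, Finset.sum_add_distrib, hv, Finset.sum_const, Finset.card_univ,
      nsmul_eq_mul, div_self hs.ne']
  refine (shift_div_iff G a b M hs).1 <| hFG _ _
    (hnonneg a fun i => by linarith [hM i, abs_nonneg (b i)])
    (hnonneg b fun i => by linarith [hM i, abs_nonneg (a i)])
    (hone a ha) (hone b hb) ((shift_div_iff F a b M hs).2 h)

end MixtureLE

section ConditionalProbability

variable {Ω : Type*} [MeasurableSpace Ω] {μ : Measure Ω}

theorem pr_inter_add_pr_sdiff [IsFiniteMeasure μ] (s : Set Ω) {t : Set Ω}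
    (ht : MeasurableSet t) : pr μ (s ∩ t) + pr μ (s \ t) = pr μ s := by
  rw [pr, pr, pr, ← ENNReal.toReal_add (measure_ne_top μ _) (measure_ne_top μ _),
    measure_inter_add_sdiff s ht]

theorem cpr_inter_add_cpr_sdiff [IsFiniteMeasure μ] (s u : Set Ω) {t : Set Ω}
    (ht : MeasurableSet t) : cpr μ (s ∩ t) u + cpr μ (s \ t) u = cpr μ s u := by
  rw [cpr, cpr, cpr, ← add_div, inter_right_comm, ← inter_sdiff_right_comm,
    pr_inter_add_pr_sdiff _ ht]

theorem cpr_inter_eq_mul (s t u : Set Ω) (h : pr μ (t ∩ u) ≠ 0) :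
    cpr μ (s ∩ t) u = cpr μ t u * cpr μ s (t ∩ u) := by
  rw [cpr, cpr, cpr, inter_assoc, div_mul_div_comm, mul_comm (pr μ (t ∩ u)),
    mul_div_mul_right _ _ h]

variable {ι : Type*} [MeasurableSpace ι] [MeasurableSingletonClass ι] {Z : Ω → ι}

theorem pr_eq_sum_pr_inter [IsFiniteMeasure μ] [Fintype ι] (hZ : Measurable Z) (s : Set Ω) :
    pr μ s = ∑ i, pr μ (s ∩ {ω | Z ω = i}) := by
  have h := sum_measure_preimage_singleton (μ := μ.restrict s) Finset.univ
    fun i _ => hZ (measurableSet_singleton i)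
  simp only [Finset.coe_univ, preimage_univ, Measure.restrict_apply_univ,
    Measure.restrict_apply (hZ (measurableSet_singleton _))] at h
  rw [pr, ← h, ENNReal.toReal_sum fun i _ => measure_ne_top μ _]
  exact Finset.sum_congr rfl fun i _ => by rw [inter_comm]; rfl

theorem sum_pr_inter_div_eq_one [IsFiniteMeasure μ] [Fintype ι] (hZ : Measurable Z)
    {A : Set Ω} (hA : pr μ A ≠ 0) : ∑ i, pr μ (A ∩ {ω | Z ω = i}) / pr μ A = 1 := by
  rw [← Finset.sum_div, ← pr_eq_sum_pr_inter hZ, div_self hA]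

theorem cpr_eq_sum_mul_cpr [IsFiniteMeasure μ] [Fintype ι] (hZ : Measurable Z) (s A : Set Ω)
    (hA : ∀ i, pr μ (A ∩ {ω | Z ω = i}) ≠ 0) :
    cpr μ s A = ∑ i, pr μ (A ∩ {ω | Z ω = i}) / pr μ A * cpr μ s (A ∩ {ω | Z ω = i}) := by
  rw [cpr, pr_eq_sum_pr_inter hZ, Finset.sum_div]
  refine Finset.sum_congr rfl fun i _ => ?_
  rw [cpr, div_mul_div_comm, mul_comm (pr μ _), mul_div_mul_right _ _ (hA i), inter_assoc]

theorem ProbabilityTheory.IndepFun.cpr_preimage_eq_pr {β : Type*} [MeasurableSpace β]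
    {X : Ω → β} (hind : IndepFun Z X μ) {B : Set β} (hB : MeasurableSet B) {i : ι}
    (hi : pr μ {ω | Z ω = i} ≠ 0) : cpr μ (X ⁻¹' B) {ω | Z ω = i} = pr μ (X ⁻¹' B) := by
  have h := hind.measure_inter_preimage_eq_mul _ _ (measurableSet_singleton i) hB
  rw [cpr, inter_comm, pr, pr, pr,
    show {ω | Z ω = i} ∩ X ⁻¹' B = Z ⁻¹' {i} ∩ X ⁻¹' B from rfl, h, ENNReal.toReal_mul]
  exact mul_div_cancel_left₀ _ hi

end ConditionalProbability

section PotentialOutcomes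

variable {Ω : Type*} {Y0 Y1 Y : Ω → ℝ} {D : Ω → ℕ}

theorem le_inter_treated_eq (hYobs : ∀ ω, Y ω = if D ω = 1 then Y1 ω else Y0 ω) (y : ℝ) :
    {ω | Y ω ≤ y} ∩ {ω | D ω = 1} = {ω | Y1 ω ≤ y} ∩ {ω | D ω = 1} := by
  ext ω
  by_cases h : D ω = 1 <;> simp [hYobs ω, h]

theorem le_and_untreated_eq (hD01 : ∀ ω, D ω = 0 ∨ D ω = 1)
    (hYobs : ∀ ω, Y ω = if D ω = 1 then Y1 ω else Y0 ω) (y : ℝ) :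
    {ω | Y ω ≤ y ∧ D ω = 0} = {ω | Y0 ω ≤ y} \ {ω | D ω = 1} := by
  ext ω
  rcases hD01 ω with h | h <;> simp [hYobs ω, h]

variable [MeasurableSpace Ω] {μ : Measure Ω} {ι : Type*} {Z : Ω → ι}

theorem cpr_le_and_treated_eq (hYobs : ∀ ω, Y ω = if D ω = 1 then Y1 ω else Y0 ω) (y : ℝ)
    {i : ι} (hi : pr μ {ω | D ω = 1 ∧ Z ω = i} ≠ 0) :
    cpr μ {ω | Y ω ≤ y ∧ D ω = 1} {ω | Z ω = i}
      = cpr μ {ω | D ω = 1} {ω | Z ω = i} * cpr μ {ω | Y1 ω ≤ y} {ω | D ω = 1 ∧ Z ω = i} :=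
  (congrArg (cpr μ · _) (le_inter_treated_eq hYobs y)).trans (cpr_inter_eq_mul _ _ _ hi)

theorem cpr_treated_mul_add_cpr_untreated [IsFiniteMeasure μ] [MeasurableSpace ι]
    [MeasurableSingletonClass ι] (hD01 : ∀ ω, D ω = 0 ∨ D ω = 1)
    (hYobs : ∀ ω, Y ω = if D ω = 1 then Y1 ω else Y0 ω) (hD : Measurable D)
    (hind : IndepFun Z Y0 μ) (y : ℝ) {i : ι} (hi : pr μ {ω | Z ω = i} ≠ 0)
    (hDi : pr μ {ω | D ω = 1 ∧ Z ω = i} ≠ 0) :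
    cpr μ {ω | D ω = 1} {ω | Z ω = i} * cpr μ {ω | Y0 ω ≤ y} {ω | D ω = 1 ∧ Z ω = i}
      + cpr μ {ω | Y ω ≤ y ∧ D ω = 0} {ω | Z ω = i} = pr μ {ω | Y0 ω ≤ y} := by
  have hsplit := cpr_inter_add_cpr_sdiff (μ := μ) {ω | Y0 ω ≤ y} {ω | Z ω = i}
    (t := {ω | D ω = 1}) (hD (measurableSet_singleton 1))
  rw [cpr_inter_eq_mul _ {ω | D ω = 1} {ω | Z ω = i} hDi] at hsplit
  rw [le_and_untreated_eq hD01 hYobs]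
  exact hsplit.trans (hind.cpr_preimage_eq_pr measurableSet_Iic hi)

end PotentialOutcomes

theorem bounds_on_counterfactual_distribution_general
    {Ω : Type*} [MeasurableSpace Ω] (μ : Measure Ω) [IsProbabilityMeasure μ]
    (L : ℕ)
    (Y0 Y1 Y : Ω → ℝ) (D : Ω → ℕ) (Z : Ω → Fin L)
    (hmD : Measurable D) (hmZ : Measurable Z)
    (hD01 : ∀ ω, D ω = 0 ∨ D ω = 1)
    (hYobs : ∀ ω, Y ω = if D ω = 1 then Y1 ω else Y0 ω)
    (hZpos : ∀ ℓ : Fin L, 0 < pr μ {ω | Z ω = ℓ})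
    (hposD1 : 0 < pr μ {ω | D ω = 1})
    (hposD1Z : ∀ ℓ : Fin L, 0 < pr μ {ω | D ω = 1 ∧ Z ω = ℓ})
    (hindep0 : IndepFun Z Y0 μ)
    (p : Fin L → ℝ) (hp : ∀ ℓ, p ℓ = cpr μ {ω | D ω = 1} {ω | Z ω = ℓ})
    -- Condition S₁
    (condS1 : ∀ w wt : Fin L → ℝ, (∀ ℓ, 0 ≤ w ℓ) → (∀ ℓ, 0 ≤ wt ℓ) →
      (∑ ℓ, w ℓ) = 1 → (∑ ℓ, wt ℓ) = 1 →
      (∀ y : ℝ, (∑ ℓ, w ℓ * cpr μ {ω | Y1 ω ≤ y} {ω | D ω = 1 ∧ Z ω = ℓ})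
        ≤ ∑ ℓ, wt ℓ * cpr μ {ω | Y1 ω ≤ y} {ω | D ω = 1 ∧ Z ω = ℓ}) →
      (∀ y : ℝ, (∑ ℓ, w ℓ * cpr μ {ω | Y0 ω ≤ y} {ω | D ω = 1 ∧ Z ω = ℓ})
        ≤ ∑ ℓ, wt ℓ * cpr μ {ω | Y0 ω ≤ y} {ω | D ω = 1 ∧ Z ω = ℓ}))
    -- γ, γ̃ ∈ Γ
    (γ γt : Fin L → ℝ)
    (hγ0 : (∑ ℓ, γ ℓ) = 0) (hγ1 : (∑ ℓ, γ ℓ * p ℓ) = 1)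
    (hγt0 : (∑ ℓ, γt ℓ) = 0) (hγt1 : (∑ ℓ, γt ℓ * p ℓ) = 1)
    -- the rank conditions (2.4) and (2.5)
    (hUB : ∀ y : ℝ, cpr μ {ω | Y ω ≤ y} {ω | D ω = 1}
      ≤ ∑ ℓ, γ ℓ * cpr μ {ω | Y ω ≤ y ∧ D ω = 1} {ω | Z ω = ℓ})
    (hLB : ∀ y : ℝ, (∑ ℓ, γt ℓ * cpr μ {ω | Y ω ≤ y ∧ D ω = 1} {ω | Z ω = ℓ})
      ≤ cpr μ {ω | Y ω ≤ y} {ω | D ω = 1}) :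
    ∀ y : ℝ,
      (-∑ ℓ, γt ℓ * cpr μ {ω | Y ω ≤ y ∧ D ω = 0} {ω | Z ω = ℓ})
          ≤ cpr μ {ω | Y0 ω ≤ y} {ω | D ω = 1} ∧
        cpr μ {ω | Y0 ω ≤ y} {ω | D ω = 1}
          ≤ -∑ ℓ, γ ℓ * cpr μ {ω | Y ω ≤ y ∧ D ω = 0} {ω | Z ω = ℓ} := by
  let F1 (y : ℝ) (ℓ : Fin L) := cpr μ {ω | Y1 ω ≤ y} {ω | D ω = 1 ∧ Z ω = ℓ}
  let G0 (y : ℝ) (ℓ : Fin L) := cpr μ {ω | Y0 ω ≤ y} {ω | D ω = 1 ∧ Z ω = ℓ}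
  let π (ℓ : Fin L) := pr μ ({ω | D ω = 1} ∩ {ω | Z ω = ℓ}) / pr μ {ω | D ω = 1}
  have hπ : ∑ ℓ, π ℓ = 1 := sum_pr_inter_div_eq_one hmZ hposD1.ne'
  have hY1 (y : ℝ) : cpr μ {ω | Y ω ≤ y} {ω | D ω = 1} = ∑ ℓ, π ℓ * F1 y ℓ := by
    rw [cpr, le_inter_treated_eq hYobs, ← cpr]
    exact cpr_eq_sum_mul_cpr hmZ _ _ fun ℓ => (hposD1Z ℓ).ne'
  have hY0 (y : ℝ) : cpr μ {ω | Y0 ω ≤ y} {ω | D ω = 1} = ∑ ℓ, π ℓ * G0 y ℓ :=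
    cpr_eq_sum_mul_cpr hmZ _ _ fun ℓ => (hposD1Z ℓ).ne'
  have hY1Z (c : Fin L → ℝ) (y : ℝ) :
      ∑ ℓ, c ℓ * cpr μ {ω | Y ω ≤ y ∧ D ω = 1} {ω | Z ω = ℓ} = ∑ ℓ, c ℓ * p ℓ * F1 y ℓ := by
    simp only [cpr_le_and_treated_eq hYobs y (hposD1Z _).ne', hp, mul_assoc, F1]
  have hY0Z (c : Fin L → ℝ) (hc : ∑ ℓ, c ℓ = 0) (y : ℝ) :
      ∑ ℓ, c ℓ * p ℓ * G0 y ℓ = -∑ ℓ, c ℓ * cpr μ {ω | Y ω ≤ y ∧ D ω = 0} {ω | Z ω = ℓ} := by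
    simp only [mul_assoc]
    refine Finset.sum_mul_eq_neg_sum_mul_of_add_eq_const (K := pr μ {ω | Y0 ω ≤ y}) _ hc
      fun ℓ _ => ?_
    rw [hp]
    exact cpr_treated_mul_add_cpr_untreated hD01 hYobs hmD hindep0 y (hZpos ℓ).ne' (hposD1Z ℓ).ne'
  have upper : MixtureLE G0 π (fun ℓ => γ ℓ * p ℓ) :=
    MixtureLE.of_transfer_nonneg condS1 hπ hγ1 fun y =>
      (hY1 y).symm.trans_le ((hUB y).trans_eq (hY1Z γ y))
  have lower : MixtureLE G0 (fun ℓ => γt ℓ * p ℓ) π :=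
    MixtureLE.of_transfer_nonneg condS1 hγt1 hπ fun y =>
      (hY1Z γt y).symm.trans_le ((hLB y).trans_eq (hY1 y))
  exact fun y => ⟨(hY0Z γt hγt0 y).symm.trans_le ((lower y).trans_eq (hY0 y).symm),
    (hY0 y).trans_le ((upper y).trans_eq (hY0Z γ hγ0 y))⟩

/-- Theorem 1 (bounds on the counterfactual distribution `P[Y₀ ≤ y | D = 1]`). -/
theorem bounds_on_counterfactual_distribution
    {Ω : Type*} [MeasurableSpace Ω] (μ : Measure Ω) [IsProbabilityMeasure μ]
    (L : ℕ) [NeZero L]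
    (Y0 Y1 Y : Ω → ℝ) (D : Ω → ℕ) (Z : Ω → Fin L)
    (hmY0 : Measurable Y0) (hmY1 : Measurable Y1) (hmD : Measurable D) (hmZ : Measurable Z)
    (hD01 : ∀ ω, D ω = 0 ∨ D ω = 1)
    (hYobs : ∀ ω, Y ω = if D ω = 1 then Y1 ω else Y0 ω)
    (hZpos : ∀ ℓ : Fin L, 0 < pr μ {ω | Z ω = ℓ})
    (hposD1 : 0 < pr μ {ω | D ω = 1})
    (hposD1Z : ∀ ℓ : Fin L, 0 < pr μ {ω | D ω = 1 ∧ Z ω = ℓ})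
    (hindep0 : IndepFun Z Y0 μ) (hindep1 : IndepFun Z Y1 μ)
    (p : Fin L → ℝ) (hp : ∀ ℓ, p ℓ = cpr μ {ω | D ω = 1} {ω | Z ω = ℓ})
    (hp01 : ∀ ℓ, 0 < p ℓ ∧ p ℓ < 1)
    -- Condition S₁
    (condS1 : ∀ w wt : Fin L → ℝ, (∀ ℓ, 0 ≤ w ℓ) → (∀ ℓ, 0 ≤ wt ℓ) →
      (∑ ℓ, w ℓ) = 1 → (∑ ℓ, wt ℓ) = 1 →
      (∀ y : ℝ, (∑ ℓ, w ℓ * cpr μ {ω | Y1 ω ≤ y} {ω | D ω = 1 ∧ Z ω = ℓ})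
        ≤ ∑ ℓ, wt ℓ * cpr μ {ω | Y1 ω ≤ y} {ω | D ω = 1 ∧ Z ω = ℓ}) →
      (∀ y : ℝ, (∑ ℓ, w ℓ * cpr μ {ω | Y0 ω ≤ y} {ω | D ω = 1 ∧ Z ω = ℓ})
        ≤ ∑ ℓ, wt ℓ * cpr μ {ω | Y0 ω ≤ y} {ω | D ω = 1 ∧ Z ω = ℓ}))
    -- γ, γ̃ ∈ Γ
    (γ γt : Fin L → ℝ)
    (hγ0 : (∑ ℓ, γ ℓ) = 0) (hγ1 : (∑ ℓ, γ ℓ * p ℓ) = 1)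
    (hγt0 : (∑ ℓ, γt ℓ) = 0) (hγt1 : (∑ ℓ, γt ℓ * p ℓ) = 1)
    -- the rank conditions (2.4) and (2.5)
    (hUB : ∀ y : ℝ, cpr μ {ω | Y ω ≤ y} {ω | D ω = 1}
      ≤ ∑ ℓ, γ ℓ * cpr μ {ω | Y ω ≤ y ∧ D ω = 1} {ω | Z ω = ℓ})
    (hLB : ∀ y : ℝ, (∑ ℓ, γt ℓ * cpr μ {ω | Y ω ≤ y ∧ D ω = 1} {ω | Z ω = ℓ})
      ≤ cpr μ {ω | Y ω ≤ y} {ω | D ω = 1}) :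
    ∀ y : ℝ,
      (-∑ ℓ, γt ℓ * cpr μ {ω | Y ω ≤ y ∧ D ω = 0} {ω | Z ω = ℓ})
          ≤ cpr μ {ω | Y0 ω ≤ y} {ω | D ω = 1} ∧
        cpr μ {ω | Y0 ω ≤ y} {ω | D ω = 1}
          ≤ -∑ ℓ, γ ℓ * cpr μ {ω | Y ω ≤ y ∧ D ω = 0} {ω | Z ω = ℓ} :=
  bounds_on_counterfactual_distribution_general μ L Y0 Y1 Y D Z hmD hmZ hD01 hYobs hZpos hposD1
    hposD1Z hindep0 p hp condS1 γ γt hγ0 hγ1 hγt0 hγt1 hUB hLB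
end

section
/- Under LATE monotonicity with ordering D_{z_1} ≤ D_{z_2} ≤ ⋯ ≤ D_{z_L} almost surely, independence of Z from (Y0, Y1, D_{z_1},...,D_{z_L}), 0 < p(z_ℓ) < 1 for all ℓ, p_1 := P[AT] > 0 and p_ℓ := P[(z_{ℓ−1},z_ℓ)-C] > 0 for ℓ = 2,...,L, suppose L ≥ 2 and the nonnegative weight vectors w ≠ w̃ (each summing to 1) satisfy w_1 + p_1 Σ_{ℓ=2}^L w_ℓ/p(z_ℓ) = w̃_1 + p_1 Σ_{ℓ=2}^L w̃_ℓ/p(z_ℓ). Then for each d ∈ {0,1}, the inequality Σ_{ℓ=1}^L w_ℓ P[Y_d ≤ y | D_{z_ℓ}=1] ≤ Σ_{ℓ=1}^L w̃_ℓ P[Y_d ≤ y | D_{z_ℓ}=1] for all y can be expressed as Σ_{ℓ=2}^L ω_ℓ P[Y_d ≤ y | (z_{ℓ−1},z_ℓ)-C] ≤ Σ_{ℓ=2}^L ω̃_ℓ P[Y_d ≤ y | (z_{ℓ−1},z_ℓ)-C] for all y, for some nonnegative weights ω_ℓ and ω̃_ℓ, ℓ = 2,...,L. -/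
open MeasureTheory ProbabilityTheory Filter Set

/-! Under monotonicity the event `D_{z_ℓ} = 1` is, up to a null set, the disjoint union of the
always-takers and the compliers `C_2, …, C_ℓ`, and independence of `Z` gives
`p(z_ℓ) = P[D_{z_ℓ} = 1]`. Hence `p(z_ℓ) P[Y_d ≤ y | D_{z_ℓ} = 1] = ∑_{k ≤ ℓ} P[Y_d ≤ y, C_k]`, and
exchanging the sums writes the `w`-mixture as `∑_k ω_k P[Y_d ≤ y | C_k]` with
`ω_k = P[C_k] ∑_{ℓ ≥ k} w_ℓ / p(z_ℓ)`. The balance condition says precisely that the always-taker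
weights `ω_1` of `w` and `w̃` agree, so that term cancels from the inequality. -/

section

variable {Ω : Type*} [MeasurableSpace Ω] {μ : Measure Ω}

lemma pr_mul_cpr [IsFiniteMeasure μ] (s A : Set Ω) : pr μ A * cpr μ s A = pr μ (s ∩ A) := by
  rcases eq_or_ne (pr μ A) 0 with hA | hA
  · have hsA : pr μ (s ∩ A) = 0 :=
      le_antisymm (hA ▸ measureReal_mono Set.inter_subset_right) measureReal_nonneg
    simp [cpr, hA, hsA]
  · exact mul_div_cancel₀ _ hA

lemma cpr_preimage_of_indepFun {α β : Type*} [MeasurableSpace α] [MeasurableSpace β]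
    {Z : Ω → α} {X : Ω → β} (h : IndepFun Z X μ) {S : Set α} {T : Set β}
    (hS : MeasurableSet S) (hT : MeasurableSet T) (hZ : pr μ (Z ⁻¹' S) ≠ 0) :
    cpr μ (X ⁻¹' T) (Z ⁻¹' S) = pr μ (X ⁻¹' T) := by
  rw [cpr, pr, Set.inter_comm, h.measure_inter_preimage_eq_mul _ _ hS hT, ENNReal.toReal_mul]
  exact mul_div_cancel_left₀ _ hZ

lemma cpr_treated_eq_pr_of_indepFun {ι : Type*} [MeasurableSpace ι] [MeasurableSingletonClass ι]
    {Z : Ω → ι} {Dz : ι → Ω → ℕ} {D : Ω → ℕ} (hD : ∀ ω, D ω = Dz (Z ω) ω)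
    (h : IndepFun Z (fun ω ℓ => Dz ℓ ω) μ) {ℓ : ι} (hZ : pr μ {ω | Z ω = ℓ} ≠ 0) :
    cpr μ {ω | D ω = 1} {ω | Z ω = ℓ} = pr μ {ω | Dz ℓ ω = 1} := by
  have hD_on_Z : {ω | D ω = 1} ∩ {ω | Z ω = ℓ} = {ω | Dz ℓ ω = 1} ∩ {ω | Z ω = ℓ} := by
    ext ω
    simp only [Set.mem_inter_iff, Set.mem_ofPred_eq, hD]
    exact and_congr_left fun hZℓ => by rw [hZℓ]
  rw [cpr, hD_on_Z]
  exact cpr_preimage_of_indepFun h (measurableSet_singleton ℓ)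
    (measurable_pi_apply ℓ (measurableSet_singleton 1)) hZ

lemma pr_inter_eq_one_eq_add [IsFiniteMeasure μ] {a b : Ω → ℕ}
    (ha : Measurable a) (hb : Measurable b)
    (ha01 : ∀ ω, a ω = 0 ∨ a ω = 1) (hb01 : ∀ ω, b ω = 0 ∨ b ω = 1)
    (hab : ∀ᵐ ω ∂μ, a ω ≤ b ω) {S : Set Ω} (hS : MeasurableSet S) :
    pr μ (S ∩ {ω | b ω = 1})
      = pr μ (S ∩ {ω | a ω = 1}) + pr μ (S ∩ {ω | a ω = 0 ∧ b ω = 1}) := by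
  have hsplit : (S ∩ {ω | b ω = 1} : Set Ω)
      =ᵐ[μ] ((S ∩ {ω | a ω = 1}) ∪ (S ∩ {ω | a ω = 0 ∧ b ω = 1}) : Set Ω) := by
    refine eventuallyEq_set.2 (hab.mono fun ω hω => ?_)
    rcases ha01 ω with h | h <;> rcases hb01 ω with h' | h' <;> simp [h, h'] at hω ⊢
  have hdisj : Disjoint (S ∩ {ω | a ω = 1}) (S ∩ {ω | a ω = 0 ∧ b ω = 1}) :=
    Set.disjoint_left.2 fun ω h1 h2 => by simp_all
  have hmeas : MeasurableSet (S ∩ {ω | a ω = 0 ∧ b ω = 1}) :=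
    hS.inter ((measurableSet_eq_fun ha measurable_const).inter
      (measurableSet_eq_fun hb measurable_const))
  rw [pr, measure_congr hsplit]
  exact measureReal_union hdisj hmeas

section Compliers

variable {n : ℕ} {Dz : Fin (n + 1) → Ω → ℕ} {C : Fin (n + 1) → Set Ω}

lemma pr_inter_treated_eq_sum_compliers [IsFiniteMeasure μ] (hmDz : ∀ ℓ, Measurable (Dz ℓ))
    (hDz01 : ∀ ℓ ω, Dz ℓ ω = 0 ∨ Dz ℓ ω = 1)
    (hmono : ∀ i : Fin n, ∀ᵐ ω ∂μ, Dz i.castSucc ω ≤ Dz i.succ ω)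
    (hC0 : C 0 = {ω | Dz 0 ω = 1})
    (hCl : ∀ ℓ : Fin (n + 1), ℓ ≠ 0 → C ℓ = {ω | Dz (ℓ - 1) ω = 0 ∧ Dz ℓ ω = 1})
    {S : Set Ω} (hS : MeasurableSet S) (ℓ : Fin (n + 1)) :
    pr μ (S ∩ {ω | Dz ℓ ω = 1}) = ∑ k ∈ Finset.Iic ℓ, pr μ (S ∩ C k) := by
  induction ℓ using Fin.induction with
  | zero =>
    rw [show Finset.Iic (0 : Fin (n + 1)) = {0} from Finset.Iic_bot, Finset.sum_singleton, hC0]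
  | succ i ih =>
    have hIic : Finset.Iic i.succ = insert i.succ (Finset.Iic i.castSucc) := by
      ext k
      simp only [Finset.mem_Iic, Finset.mem_insert, Fin.le_def, Fin.ext_iff, Fin.val_succ,
        Fin.val_castSucc]
      omega
    have hpred : i.succ - 1 = i.castSucc := by ext; simp [Fin.coe_sub_one]
    rw [hIic, Finset.sum_insert (by simp), ← ih, hCl i.succ i.succ_ne_zero, hpred,
      pr_inter_eq_one_eq_add (hmDz _) (hmDz _) (hDz01 _) (hDz01 _) (hmono i) hS, add_comm]

/-- The weight of `P[· | C k]` in the mixture `∑ ℓ, v ℓ • P[· | Dz ℓ = 1]`, where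
`q ℓ = P[Dz ℓ = 1]`. -/
noncomputable def complierWeight (μ : Measure Ω) (C : Fin (n + 1) → Set Ω) (q v : Fin (n + 1) → ℝ)
    (k : Fin (n + 1)) : ℝ :=
  pr μ (C k) * ∑ ℓ ∈ Finset.Ici k, v ℓ / q ℓ

lemma complierWeight_nonneg {q v : Fin (n + 1) → ℝ} (hq : ∀ ℓ, 0 ≤ q ℓ) (hv : ∀ ℓ, 0 ≤ v ℓ)
    (k : Fin (n + 1)) : 0 ≤ complierWeight μ C q v k :=
  mul_nonneg measureReal_nonneg (Finset.sum_nonneg fun ℓ _ => div_nonneg (hv ℓ) (hq ℓ))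

lemma complierWeight_zero_eq {q v v' : Fin (n + 1) → ℝ} (hq0 : q 0 = pr μ (C 0))
    (hbal : v 0 + pr μ (C 0) * (∑ ℓ ∈ Finset.univ.erase 0, v ℓ / q ℓ)
      = v' 0 + pr μ (C 0) * (∑ ℓ ∈ Finset.univ.erase 0, v' ℓ / q ℓ)) :
    complierWeight μ C q v 0 = complierWeight μ C q v' 0 := by
  rcases eq_or_ne (pr μ (C 0)) 0 with h0 | h0
  · simp [complierWeight, h0]
  · rw [complierWeight, complierWeight,
      show Finset.Ici (0 : Fin (n + 1)) = Finset.univ from Finset.Ici_bot,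
      ← Finset.add_sum_erase _ _ (Finset.mem_univ 0),
      ← Finset.add_sum_erase _ _ (Finset.mem_univ 0), mul_add, mul_add, hq0, mul_div_cancel₀ _ h0, mul_div_cancel₀ _ h0, hbal]

lemma sum_mul_cpr_treated_eq_sum_complierWeight [IsFiniteMeasure μ]
    (hmDz : ∀ ℓ, Measurable (Dz ℓ)) (hDz01 : ∀ ℓ ω, Dz ℓ ω = 0 ∨ Dz ℓ ω = 1)
    (hmono : ∀ i : Fin n, ∀ᵐ ω ∂μ, Dz i.castSucc ω ≤ Dz i.succ ω)
    (hC0 : C 0 = {ω | Dz 0 ω = 1})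
    (hCl : ∀ ℓ : Fin (n + 1), ℓ ≠ 0 → C ℓ = {ω | Dz (ℓ - 1) ω = 0 ∧ Dz ℓ ω = 1})
    {S : Set Ω} (hS : MeasurableSet S) (v : Fin (n + 1) → ℝ) :
    ∑ ℓ, v ℓ * cpr μ S {ω | Dz ℓ ω = 1}
      = ∑ k, complierWeight μ C (fun ℓ => pr μ {ω | Dz ℓ ω = 1}) v k * cpr μ S (C k) :=
  calc ∑ ℓ, v ℓ * cpr μ S {ω | Dz ℓ ω = 1}
      = ∑ ℓ, ∑ k ∈ Finset.Iic ℓ, v ℓ / pr μ {ω | Dz ℓ ω = 1} * pr μ (S ∩ C k) :=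
        Finset.sum_congr rfl fun ℓ _ => by
          rw [← Finset.mul_sum, ← pr_inter_treated_eq_sum_compliers hmDz hDz01 hmono hC0 hCl hS,
            cpr, div_mul_eq_mul_div, mul_div_assoc]
    _ = ∑ k, ∑ ℓ ∈ Finset.Ici k, v ℓ / pr μ {ω | Dz ℓ ω = 1} * pr μ (S ∩ C k) :=
        Finset.sum_comm' fun ℓ k => by simp
    _ = _ := Finset.sum_congr rfl fun k _ => by
        rw [← Finset.sum_mul, complierWeight, mul_comm (pr μ (C k)), mul_assoc, pr_mul_cpr]

end Compliers

end

theorem mixture_inequality_reduces_to_compliers_general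
    {Ω : Type*} [MeasurableSpace Ω] (μ : Measure Ω) [IsProbabilityMeasure μ]
    (L : ℕ) [NeZero L]
    (Y0 Y1 : Ω → ℝ) (Dz : Fin L → Ω → ℕ) (Z : Ω → Fin L) (D : Ω → ℕ)
    (hmY0 : Measurable Y0) (hmY1 : Measurable Y1)
    (hmDz : ∀ ℓ, Measurable (Dz ℓ))
    (hDz01 : ∀ ℓ ω, Dz ℓ ω = 0 ∨ Dz ℓ ω = 1)
    (hD : ∀ ω, D ω = Dz (Z ω) ω)
    -- LATE monotonicity, labeled so that D_{z_1} ≤ D_{z_2} ≤ ⋯ ≤ D_{z_L} a.s.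
    (hmono : ∀ ℓ ℓ' : Fin L, ℓ ≤ ℓ' → ∀ᵐ ω ∂μ, Dz ℓ ω ≤ Dz ℓ' ω)
    -- instrument exogeneity: Z ⊥ (Y0, Y1, D_{z_1}, …, D_{z_L})
    (hindep : IndepFun Z (fun ω => (Y0 ω, Y1 ω, fun ℓ => Dz ℓ ω)) μ)
    (hZpos : ∀ ℓ : Fin L, 0 < pr μ {ω | Z ω = ℓ})
    (p : Fin L → ℝ) (hp : ∀ ℓ, p ℓ = cpr μ {ω | D ω = 1} {ω | Z ω = ℓ})
    -- compliance groups: C 0 = always-takers, C ℓ = (z_{ℓ-1}, z_ℓ)-compliers for ℓ ≠ 0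
    (C : Fin L → Set Ω)
    (hC0 : C 0 = {ω | Dz 0 ω = 1})
    (hCl : ∀ ℓ : Fin L, ℓ ≠ 0 → C ℓ = {ω | Dz (ℓ - 1) ω = 0 ∧ Dz ℓ ω = 1})
    -- the weights
    (w wt : Fin L → ℝ) (hw : ∀ ℓ, 0 ≤ w ℓ) (hwt : ∀ ℓ, 0 ≤ wt ℓ)
    -- balance condition: w₁ + p₁ Σ_{ℓ≥2} w_ℓ / p(z_ℓ) = w̃₁ + p₁ Σ_{ℓ≥2} w̃_ℓ / p(z_ℓ)
    (hbal : w 0 + pr μ (C 0) * (∑ ℓ ∈ Finset.univ.erase (0 : Fin L), w ℓ / p ℓ)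
      = wt 0 + pr μ (C 0) * (∑ ℓ ∈ Finset.univ.erase (0 : Fin L), wt ℓ / p ℓ)) :
    ∀ Yd : Ω → ℝ, (Yd = Y0 ∨ Yd = Y1) →
      ∃ om omt : Fin L → ℝ, (∀ ℓ, 0 ≤ om ℓ) ∧ (∀ ℓ, 0 ≤ omt ℓ) ∧
        ((∀ y : ℝ, (∑ ℓ, w ℓ * cpr μ {ω | Yd ω ≤ y} {ω | Dz ℓ ω = 1})
            ≤ ∑ ℓ, wt ℓ * cpr μ {ω | Yd ω ≤ y} {ω | Dz ℓ ω = 1}) ↔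
          (∀ y : ℝ, (∑ ℓ ∈ Finset.univ.erase (0 : Fin L), om ℓ * cpr μ {ω | Yd ω ≤ y} (C ℓ))
            ≤ ∑ ℓ ∈ Finset.univ.erase (0 : Fin L), omt ℓ * cpr μ {ω | Yd ω ≤ y} (C ℓ))) := by
  obtain ⟨n, rfl⟩ : ∃ n, L = n + 1 := Nat.exists_eq_succ_of_ne_zero (NeZero.ne L)
  have hpA : p = fun ℓ => pr μ {ω | Dz ℓ ω = 1} := funext fun ℓ => by
    rw [hp, cpr_treated_eq_pr_of_indepFun hD
      (hindep.comp measurable_id (measurable_snd.comp measurable_snd)) (hZpos ℓ).ne']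
  intro Yd hYd
  have hmYd : Measurable Yd := by rcases hYd with rfl | rfl <;> assumption
  have hmix (v : Fin (n + 1) → ℝ) (y : ℝ) : ∑ ℓ, v ℓ * cpr μ {ω | Yd ω ≤ y} {ω | Dz ℓ ω = 1}
      = ∑ k, complierWeight μ C p v k * cpr μ {ω | Yd ω ≤ y} (C k) := by
    rw [hpA]
    exact sum_mul_cpr_treated_eq_sum_complierWeight hmDz hDz01
      (fun i => hmono _ _ i.castSucc_lt_succ.le) hC0 hCl (hmYd measurableSet_Iic) v
  have hp_nonneg (ℓ : Fin (n + 1)) : 0 ≤ p ℓ := hpA ▸ measureReal_nonneg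
  have hweight0 := complierWeight_zero_eq (by rw [hpA, hC0]) hbal
  refine ⟨complierWeight μ C p w, complierWeight μ C p wt, complierWeight_nonneg hp_nonneg hw,
    complierWeight_nonneg hp_nonneg hwt, forall_congr' fun y => ?_⟩
  rw [hmix w y, hmix wt y, ← Finset.add_sum_erase _ _ (Finset.mem_univ 0),
    ← Finset.add_sum_erase _ _ (Finset.mem_univ 0), hweight0, add_le_add_iff_left]

/-- Lemma 1(ii): if the weights `w ≠ w̃` satisfy the balance condition removing
the always-takers, the mixture FOSD inequality can be expressed purely in terms of
the complier groups. -/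
theorem mixture_inequality_reduces_to_compliers
    {Ω : Type*} [MeasurableSpace Ω] (μ : Measure Ω) [IsProbabilityMeasure μ]
    (L : ℕ) [NeZero L] (hL : 2 ≤ L)
    (Y0 Y1 Y : Ω → ℝ) (Dz : Fin L → Ω → ℕ) (Z : Ω → Fin L) (D : Ω → ℕ)
    (hmY0 : Measurable Y0) (hmY1 : Measurable Y1) (hmZ : Measurable Z)
    (hmDz : ∀ ℓ, Measurable (Dz ℓ))
    (hDz01 : ∀ ℓ ω, Dz ℓ ω = 0 ∨ Dz ℓ ω = 1)
    (hD : ∀ ω, D ω = Dz (Z ω) ω)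
    (hYobs : ∀ ω, Y ω = if D ω = 1 then Y1 ω else Y0 ω)
    -- LATE monotonicity, labeled so that D_{z_1} ≤ D_{z_2} ≤ ⋯ ≤ D_{z_L} a.s.
    (hmono : ∀ ℓ ℓ' : Fin L, ℓ ≤ ℓ' → ∀ᵐ ω ∂μ, Dz ℓ ω ≤ Dz ℓ' ω)
    -- instrument exogeneity: Z ⊥ (Y0, Y1, D_{z_1}, …, D_{z_L})
    (hindep : IndepFun Z (fun ω => (Y0 ω, Y1 ω, fun ℓ => Dz ℓ ω)) μ)
    (hZpos : ∀ ℓ : Fin L, 0 < pr μ {ω | Z ω = ℓ})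
    (p : Fin L → ℝ) (hp : ∀ ℓ, p ℓ = cpr μ {ω | D ω = 1} {ω | Z ω = ℓ})
    (hp01 : ∀ ℓ, 0 < p ℓ ∧ p ℓ < 1)
    -- compliance groups: C 0 = always-takers, C ℓ = (z_{ℓ-1}, z_ℓ)-compliers for ℓ ≠ 0
    (C : Fin L → Set Ω)
    (hC0 : C 0 = {ω | Dz 0 ω = 1})
    (hCl : ∀ ℓ : Fin L, ℓ ≠ 0 → C ℓ = {ω | Dz (ℓ - 1) ω = 0 ∧ Dz ℓ ω = 1})
    (hCpos : ∀ ℓ, 0 < pr μ (C ℓ))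
    -- the weights
    (w wt : Fin L → ℝ) (hw : ∀ ℓ, 0 ≤ w ℓ) (hwt : ∀ ℓ, 0 ≤ wt ℓ)
    (hw1 : (∑ ℓ, w ℓ) = 1) (hwt1 : (∑ ℓ, wt ℓ) = 1) (hwne : w ≠ wt)
    -- balance condition: w₁ + p₁ Σ_{ℓ≥2} w_ℓ / p(z_ℓ) = w̃₁ + p₁ Σ_{ℓ≥2} w̃_ℓ / p(z_ℓ)
    (hbal : w 0 + pr μ (C 0) * (∑ ℓ ∈ Finset.univ.erase (0 : Fin L), w ℓ / p ℓ)
      = wt 0 + pr μ (C 0) * (∑ ℓ ∈ Finset.univ.erase (0 : Fin L), wt ℓ / p ℓ)) :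
    ∀ Yd : Ω → ℝ, (Yd = Y0 ∨ Yd = Y1) →
      ∃ om omt : Fin L → ℝ, (∀ ℓ, 0 ≤ om ℓ) ∧ (∀ ℓ, 0 ≤ omt ℓ) ∧
        ((∀ y : ℝ, (∑ ℓ, w ℓ * cpr μ {ω | Yd ω ≤ y} {ω | Dz ℓ ω = 1})
            ≤ ∑ ℓ, wt ℓ * cpr μ {ω | Yd ω ≤ y} {ω | Dz ℓ ω = 1}) ↔
          (∀ y : ℝ, (∑ ℓ ∈ Finset.univ.erase (0 : Fin L), om ℓ * cpr μ {ω | Yd ω ≤ y} (C ℓ))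
            ≤ ∑ ℓ ∈ Finset.univ.erase (0 : Fin L), omt ℓ * cpr μ {ω | Yd ω ≤ y} (C ℓ))) :=
  mixture_inequality_reduces_to_compliers_general μ L Y0 Y1 Dz Z D hmY0 hmY1 hmDz hDz01 hD hmono
    hindep hZpos p hp C hC0 hCl w wt hw hwt hbal
end

section
/- Under Assumption D (the treatment is generated as D = h(Z, η) for a measurable function h, where η is a random vector with a density on 𝒯 and Z is independent of (Y0, Y1, η)), Condition S1* implies Condition S1. -/
open MeasureTheory ProbabilityTheory Filter Set

/-!
Under Assumption D the event `{D = 1, Z = z_ℓ}` is `{Z = z_ℓ} ∩ {η ∈ S_ℓ}` with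
`S_ℓ = {t | h(z_ℓ, t) = 1}`, so independence of `Z` gives
`P[Y_d ≤ y | D = 1, Z = z_ℓ] = ν(S_ℓ)⁻¹ ∫_{S_ℓ} F_d(y | t) dν(t)`.
Hence `∑ w_ℓ P[Y_d ≤ y | D = 1, Z = z_ℓ] = ∫ W_w(t) F_d(y | t) dν(t)` for the probability
density `W_w = ∑ w_ℓ 1_{S_ℓ} / ν(S_ℓ)`, the same for `d = 0` and `d = 1`, and Condition S₁ for
`w, w̃` is Condition S₁* for `W_w, W_w̃`.
-/

open scoped ENNReal

theorem integrable_of_forall_abs_setIntegral_le {α : Type*} [MeasurableSpace α]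
    {μ : Measure α} [IsFiniteMeasure μ] {f : α → ℝ} (hf : Measurable f) (C : ℝ)
    (hC : ∀ s, MeasurableSet s → |∫ x in s, f x ∂μ| ≤ C) : Integrable f μ := by
  set s : ℕ → Set α := fun n => {x | |f x| ≤ n}
  have hs : ∀ n, MeasurableSet (s n) := fun n => hf.abs measurableSet_Iic
  have hpos : MeasurableSet {x | 0 ≤ f x} := measurableSet_le measurable_const hf
  have hneg : MeasurableSet {x | f x ≤ 0} := measurableSet_le hf measurable_const
  have hbound : ∀ n, ∫⁻ x in s n, ‖f x‖ₑ ∂μ ≤ ENNReal.ofReal (2 * C) := by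
    intro n
    have hint : IntegrableOn f (s n) μ :=
      Measure.integrableOn_of_bounded (M := n) (measure_ne_top μ _) hf.aestronglyMeasurable
        ((ae_restrict_mem (hs n)).mono fun x hx => hx)
    rw [← ofReal_integral_norm_eq_lintegral_enorm hint, integral_norm_eq_pos_sub_neg hint,
      Measure.restrict_restrict hpos, Measure.restrict_restrict hneg]
    have h1 := abs_le.1 (hC _ (hpos.inter (hs n)))
    have h2 := abs_le.1 (hC _ (hneg.inter (hs n)))
    exact ENNReal.ofReal_le_ofReal (by linarith)
  have hmono : Monotone s := fun m n hmn x (hx : |f x| ≤ m) =>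
    hx.trans (Nat.cast_le.2 hmn)
  have hcover : ⋃ n, s n = univ := eq_univ_of_forall fun x => mem_iUnion.2 (exists_nat_ge |f x|)
  refine ⟨hf.aestronglyMeasurable, ?_⟩
  rw [hasFiniteIntegral_iff_enorm, ← setLIntegral_univ, ← hcover,
    setLIntegral_iUnion_of_directed _ hmono.directed_le]
  exact (iSup_le hbound).trans_lt ENNReal.ofReal_lt_top

section SelectionWeight

variable {T ι : Type*} [MeasurableSpace T] [Fintype ι] (ν : Measure T) (S : ι → Set T)

noncomputable def selectionWeight (v : ι → ℝ) (t : T) : ℝ :=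
  ∑ ℓ, (S ℓ).indicator (fun _ => v ℓ / ν.real (S ℓ)) t

variable {ν S}

theorem measurable_selectionWeight (hS : ∀ ℓ, MeasurableSet (S ℓ)) (v : ι → ℝ) :
    Measurable (selectionWeight ν S v) :=
  Finset.measurable_sum _ fun ℓ _ => measurable_const.indicator (hS ℓ)

theorem selectionWeight_nonneg {v : ι → ℝ} (hv : ∀ ℓ, 0 ≤ v ℓ) (t : T) :
    0 ≤ selectionWeight ν S v t :=
  Finset.sum_nonneg fun ℓ _ =>
    indicator_nonneg (fun _ _ => div_nonneg (hv ℓ) measureReal_nonneg) t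

theorem integral_selectionWeight_mul (hS : ∀ ℓ, MeasurableSet (S ℓ)) (v : ι → ℝ)
    {F : T → ℝ} (hF : Integrable F ν) :
    ∫ t, selectionWeight ν S v t * F t ∂ν
      = ∑ ℓ, v ℓ * ((∫ t in S ℓ, F t ∂ν) / ν.real (S ℓ)) := by
  have hterm : ∀ ℓ, (fun t => (S ℓ).indicator (fun _ => v ℓ / ν.real (S ℓ)) t * F t)
      = (S ℓ).indicator (fun t => v ℓ / ν.real (S ℓ) * F t) := fun ℓ => by
    funext t
    rw [indicator_mul_left]
  simp only [selectionWeight, Finset.sum_mul]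
  rw [integral_finsetSum _ fun ℓ _ => by
    rw [hterm ℓ]; exact (hF.const_mul _).indicator (hS ℓ)]
  refine Finset.sum_congr rfl fun ℓ _ => ?_
  rw [hterm ℓ, integral_indicator (hS ℓ), integral_const_mul]
  ring

theorem integral_selectionWeight [IsFiniteMeasure ν] (hS : ∀ ℓ, MeasurableSet (S ℓ))
    (hSpos : ∀ ℓ, ν.real (S ℓ) ≠ 0) (v : ι → ℝ) :
    ∫ t, selectionWeight ν S v t ∂ν = ∑ ℓ, v ℓ := by
  simpa [setIntegral_const, hSpos] using
    integral_selectionWeight_mul hS v (integrable_const (1 : ℝ) (μ := ν))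

end SelectionWeight

section TreatmentAssignment

variable {Ω T ι β : Type*} [MeasurableSpace Ω] [MeasurableSpace T] [MeasurableSpace ι]
  [MeasurableSingletonClass ι] [MeasurableSpace β] {μ : Measure Ω}
  {G : Ω → β} {η : Ω → T} {Z : Ω → ι} {h : ι → T → ℕ} {D : Ω → ℕ}

theorem measure_inter_treated_eq_mul (hD : ∀ ω, D ω = h (Z ω) (η ω))
    (hind : IndepFun Z (fun ω => (G ω, η ω)) μ) {B : Set β} (hB : MeasurableSet B) {ℓ : ι}
    (hS : MeasurableSet (h ℓ ⁻¹' {1})) :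
    μ ({ω | G ω ∈ B} ∩ {ω | D ω = 1 ∧ Z ω = ℓ})
      = μ {ω | Z ω = ℓ} * μ {ω | G ω ∈ B ∧ η ω ∈ h ℓ ⁻¹' {1}} := by
  have hevent : {ω | G ω ∈ B} ∩ {ω | D ω = 1 ∧ Z ω = ℓ}
      = Z ⁻¹' {ℓ} ∩ (fun ω => (G ω, η ω)) ⁻¹' (B ×ˢ (h ℓ ⁻¹' {1})) := by
    ext ω
    simp only [mem_inter_iff, mem_ofPred_eq, mem_preimage, mem_singleton_iff, mem_prod, hD ω]
    constructor
    · rintro ⟨hG, hh, rfl⟩; exact ⟨rfl, hG, hh⟩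
    · rintro ⟨rfl, hG, hh⟩; exact ⟨hG, hh, rfl⟩
  rw [hevent, hind.measure_inter_preimage_eq_mul _ _ (measurableSet_singleton ℓ) (hB.prod hS)]
  rfl

theorem pr_treated_eq_mul (hD : ∀ ω, D ω = h (Z ω) (η ω))
    (hind : IndepFun Z (fun ω => (G ω, η ω)) μ) (hη : Measurable η) {ℓ : ι}
    (hS : MeasurableSet (h ℓ ⁻¹' {1})) :
    pr μ {ω | D ω = 1 ∧ Z ω = ℓ} = pr μ {ω | Z ω = ℓ} * (μ.map η).real (h ℓ ⁻¹' {1}) := by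
  have hinter := measure_inter_treated_eq_mul hD hind MeasurableSet.univ hS
  simp only [mem_univ, true_and, ofPred_true, univ_inter] at hinter
  rw [measureReal_def, Measure.map_apply hη hS]
  exact congrArg ENNReal.toReal hinter |>.trans (ENNReal.toReal_mul ..)

theorem cpr_treated_eq_div (hD : ∀ ω, D ω = h (Z ω) (η ω))
    (hind : IndepFun Z (fun ω => (G ω, η ω)) μ) (hη : Measurable η) {ℓ : ι}
    (hS : MeasurableSet (h ℓ ⁻¹' {1})) (hpos : 0 < pr μ {ω | D ω = 1 ∧ Z ω = ℓ})
    {B : Set β} (hB : MeasurableSet B) :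
    cpr μ {ω | G ω ∈ B} {ω | D ω = 1 ∧ Z ω = ℓ}
      = pr μ {ω | G ω ∈ B ∧ η ω ∈ h ℓ ⁻¹' {1}} / (μ.map η).real (h ℓ ⁻¹' {1}) := by
  have hfac := pr_treated_eq_mul hD hind hη hS
  have hZ : pr μ {ω | Z ω = ℓ} ≠ 0 := left_ne_zero_of_mul (hfac ▸ hpos.ne')
  rw [cpr, hfac, pr, measure_inter_treated_eq_mul hD hind hB hS, ENNReal.toReal_mul]
  exact mul_div_mul_left _ _ hZ

theorem sum_mul_cpr_treated_eq_integral_selectionWeight_mul [Fintype ι] [IsProbabilityMeasure μ]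
    {G : Ω → ℝ} (hD : ∀ ω, D ω = h (Z ω) (η ω)) (hind : IndepFun Z (fun ω => (G ω, η ω)) μ)
    (hη : Measurable η) (hS : ∀ ℓ, MeasurableSet (h ℓ ⁻¹' {1}))
    (hpos : ∀ ℓ, 0 < pr μ {ω | D ω = 1 ∧ Z ω = ℓ}) {F : ℝ → T → ℝ}
    (hFm : ∀ y, Measurable (F y))
    (hF : ∀ (y : ℝ) (s : Set T), MeasurableSet s →
      pr μ {ω | G ω ≤ y ∧ η ω ∈ s} = ∫ t in s, F y t ∂(μ.map η))
    (v : ι → ℝ) (y : ℝ) :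
    ∑ ℓ, v ℓ * cpr μ {ω | G ω ≤ y} {ω | D ω = 1 ∧ Z ω = ℓ}
      = ∫ t, selectionWeight (μ.map η) (fun ℓ => h ℓ ⁻¹' {1}) v t * F y t ∂(μ.map η) := by
  have := Measure.isProbabilityMeasure_map (μ := μ) hη.aemeasurable
  have hint : Integrable (F y) (μ.map η) :=
    integrable_of_forall_abs_setIntegral_le (hFm y) 1 fun s hs => by
      rw [← hF y s hs, abs_le]
      exact ⟨le_trans (by norm_num) ENNReal.toReal_nonneg, measureReal_le_one⟩
  rw [integral_selectionWeight_mul hS v hint]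
  refine Finset.sum_congr rfl fun ℓ _ => ?_
  rw [← hF y _ (hS ℓ)]
  exact congrArg (v ℓ * ·) (cpr_treated_eq_div hD hind hη (hS ℓ) (hpos ℓ) measurableSet_Iic)

end TreatmentAssignment

theorem condS1star_implies_condS1_general
    {Ω : Type*} [MeasurableSpace Ω] (μ : Measure Ω) [IsProbabilityMeasure μ]
    {T : Type*} [MeasurableSpace T]
    (L : ℕ)
    (Y0 Y1 : Ω → ℝ) (η : Ω → T) (Z : Ω → Fin L) (h : Fin L → T → ℕ) (D : Ω → ℕ)
    (hmη : Measurable η)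
    (hmh : ∀ ℓ, Measurable (h ℓ))
    -- Assumption D: D = h(Z, η), with Z ⊥ (Y₀, Y₁, η)
    (hD : ∀ ω, D ω = h (Z ω) (η ω))
    (hindep : IndepFun Z (fun ω => (Y0 ω, Y1 ω, η ω)) μ)
    (hposD1Z : ∀ ℓ : Fin L, 0 < pr μ {ω | D ω = 1 ∧ Z ω = ℓ})
    -- the distribution of η and the conditional CDFs of Y₀, Y₁ given η
    (ν : Measure T) (hν : ν = μ.map η)
    (F0 F1 : ℝ → T → ℝ)
    (hF0meas : ∀ y, Measurable (F0 y)) (hF1meas : ∀ y, Measurable (F1 y))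
    (hF0 : ∀ (y : ℝ) (s : Set T), MeasurableSet s →
      pr μ {ω | Y0 ω ≤ y ∧ η ω ∈ s} = ∫ t in s, F0 y t ∂ν)
    (hF1 : ∀ (y : ℝ) (s : Set T), MeasurableSet s →
      pr μ {ω | Y1 ω ≤ y ∧ η ω ∈ s} = ∫ t in s, F1 y t ∂ν)
    -- Condition S₁*
    (condS1star : ∀ w wt : T → ℝ, Measurable w → Measurable wt →
      (∀ t, 0 ≤ w t) → (∀ t, 0 ≤ wt t) →
      (∫ t, w t ∂ν) = 1 → (∫ t, wt t ∂ν) = 1 →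
      (∀ y : ℝ, (∫ t, w t * F1 y t ∂ν) ≤ ∫ t, wt t * F1 y t ∂ν) →
      (∀ y : ℝ, (∫ t, w t * F0 y t ∂ν) ≤ ∫ t, wt t * F0 y t ∂ν)) :
    -- Condition S₁
    ∀ w wt : Fin L → ℝ, (∀ ℓ, 0 ≤ w ℓ) → (∀ ℓ, 0 ≤ wt ℓ) →
      (∑ ℓ, w ℓ) = 1 → (∑ ℓ, wt ℓ) = 1 →
      (∀ y : ℝ, (∑ ℓ, w ℓ * cpr μ {ω | Y1 ω ≤ y} {ω | D ω = 1 ∧ Z ω = ℓ})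
        ≤ ∑ ℓ, wt ℓ * cpr μ {ω | Y1 ω ≤ y} {ω | D ω = 1 ∧ Z ω = ℓ}) →
      (∀ y : ℝ, (∑ ℓ, w ℓ * cpr μ {ω | Y0 ω ≤ y} {ω | D ω = 1 ∧ Z ω = ℓ})
        ≤ ∑ ℓ, wt ℓ * cpr μ {ω | Y0 ω ≤ y} {ω | D ω = 1 ∧ Z ω = ℓ}) := by
  subst hν
  have := Measure.isProbabilityMeasure_map (μ := μ) hmη.aemeasurable
  have hS : ∀ ℓ, MeasurableSet (h ℓ ⁻¹' {1}) := fun ℓ => hmh ℓ (measurableSet_singleton 1)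
  have hind1 : IndepFun Z (fun ω => (Y1 ω, η ω)) μ :=
    hindep.comp measurable_id (measurable_snd.fst.prodMk measurable_snd.snd)
  have hind0 : IndepFun Z (fun ω => (Y0 ω, η ω)) μ :=
    hindep.comp measurable_id (measurable_fst.prodMk measurable_snd.snd)
  have hSpos : ∀ ℓ, (μ.map η).real (h ℓ ⁻¹' {1}) ≠ 0 := fun ℓ =>
    right_ne_zero_of_mul (pr_treated_eq_mul hD hind1 hmη (hS ℓ) ▸ (hposD1Z ℓ).ne')
  have hmix1 := sum_mul_cpr_treated_eq_integral_selectionWeight_mul hD hind1 hmη hS hposD1Z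
    hF1meas hF1
  have hmix0 := sum_mul_cpr_treated_eq_integral_selectionWeight_mul hD hind0 hmη hS hposD1Z
    hF0meas hF0
  intro w wt hw hwt hsw hswt hS1 y
  rw [hmix0, hmix0]
  refine condS1star _ _ (measurable_selectionWeight hS w) (measurable_selectionWeight hS wt)
    (selectionWeight_nonneg hw) (selectionWeight_nonneg hwt) ?_ ?_ (fun y => ?_) y
  · rw [integral_selectionWeight hS hSpos, hsw]
  · rw [integral_selectionWeight hS hSpos, hswt]
  · rw [← hmix1, ← hmix1]
    exact hS1 y

/-- Lemma 2: under Assumption D (selection `D = h(Z, η)` with `Z ⊥ (Y₀, Y₁, η)`),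
Condition S₁* implies Condition S₁.  Here `ν` is the distribution of the type `η`, and
`F_d y t = P[Y_d ≤ y | η = t]` is a conditional CDF of `Y_d` given `η`, encoded by the
disintegration property `P[Y_d ≤ y, η ∈ s] = ∫_{s} F_d y t dν(t)`. -/
theorem condS1star_implies_condS1
    {Ω : Type*} [MeasurableSpace Ω] (μ : Measure Ω) [IsProbabilityMeasure μ]
    {T : Type*} [MeasurableSpace T]
    (L : ℕ) [NeZero L]
    (Y0 Y1 Y : Ω → ℝ) (η : Ω → T) (Z : Ω → Fin L) (h : Fin L → T → ℕ) (D : Ω → ℕ)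
    (hmY0 : Measurable Y0) (hmY1 : Measurable Y1) (hmη : Measurable η) (hmZ : Measurable Z)
    (hmh : ∀ ℓ, Measurable (h ℓ))
    -- Assumption D: D = h(Z, η), with Z ⊥ (Y₀, Y₁, η)
    (hD : ∀ ω, D ω = h (Z ω) (η ω))
    (hYobs : ∀ ω, Y ω = if D ω = 1 then Y1 ω else Y0 ω)
    (hindep : IndepFun Z (fun ω => (Y0 ω, Y1 ω, η ω)) μ)
    (hZpos : ∀ ℓ : Fin L, 0 < pr μ {ω | Z ω = ℓ})
    (hposD1Z : ∀ ℓ : Fin L, 0 < pr μ {ω | D ω = 1 ∧ Z ω = ℓ})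
    -- the distribution of η and the conditional CDFs of Y₀, Y₁ given η
    (ν : Measure T) (hν : ν = μ.map η)
    (F0 F1 : ℝ → T → ℝ)
    (hF0meas : ∀ y, Measurable (F0 y)) (hF1meas : ∀ y, Measurable (F1 y))
    (hF0 : ∀ (y : ℝ) (s : Set T), MeasurableSet s →
      pr μ {ω | Y0 ω ≤ y ∧ η ω ∈ s} = ∫ t in s, F0 y t ∂ν)
    (hF1 : ∀ (y : ℝ) (s : Set T), MeasurableSet s →
      pr μ {ω | Y1 ω ≤ y ∧ η ω ∈ s} = ∫ t in s, F1 y t ∂ν)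
    -- Condition S₁*
    (condS1star : ∀ w wt : T → ℝ, Measurable w → Measurable wt →
      (∀ t, 0 ≤ w t) → (∀ t, 0 ≤ wt t) →
      (∫ t, w t ∂ν) = 1 → (∫ t, wt t ∂ν) = 1 →
      (∀ y : ℝ, (∫ t, w t * F1 y t ∂ν) ≤ ∫ t, wt t * F1 y t ∂ν) →
      (∀ y : ℝ, (∫ t, w t * F0 y t ∂ν) ≤ ∫ t, wt t * F0 y t ∂ν)) :
    -- Condition S₁
    ∀ w wt : Fin L → ℝ, (∀ ℓ, 0 ≤ w ℓ) → (∀ ℓ, 0 ≤ wt ℓ) →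
      (∑ ℓ, w ℓ) = 1 → (∑ ℓ, wt ℓ) = 1 →
      (∀ y : ℝ, (∑ ℓ, w ℓ * cpr μ {ω | Y1 ω ≤ y} {ω | D ω = 1 ∧ Z ω = ℓ})
        ≤ ∑ ℓ, wt ℓ * cpr μ {ω | Y1 ω ≤ y} {ω | D ω = 1 ∧ Z ω = ℓ}) →
      (∀ y : ℝ, (∑ ℓ, w ℓ * cpr μ {ω | Y0 ω ≤ y} {ω | D ω = 1 ∧ Z ω = ℓ})
        ≤ ∑ ℓ, wt ℓ * cpr μ {ω | Y0 ω ≤ y} {ω | D ω = 1 ∧ Z ω = ℓ}) :=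
  condS1star_implies_condS1_general μ L Y0 Y1 η Z h D hmη hmh hD hindep hposD1Z ν hν F0 F1 hF0meas
    hF1meas hF0 hF1 condS1star
end

section
/- Suppose Model 1 holds with ξ0 weakly more noisy than ξ1; that is: (i) D = h(Z, η) and Y = q(D, U_D), where q(d, ·) is continuous and strictly increasing and U_D = D·U1 + (1−D)·U0; (ii) conditional on (η, Z), U_d has the same distribution as U + ξ_d where ξ_d has a density and is independent of (η, U); (iii) conditional on Z, ξ0 has the same distribution as ξ1 + V for some random variable V with a density independent of ξ1. Then, together with independence of Z from (Y0, Y1), Condition S1* holds (and hence, under Assumption D, Condition S1 holds). -/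
/-!
Reweight the population of types by a density `w` and compare the laws of `Y₀`, `Y₁` under
the reweighted measure (`tiltedLaw`). Condition S₁* says that CDF dominance between two such
reweightings transfers from `Y₁` to `Y₀`. It passes from `Y₁` to `U₁` because `q(1, ·)` is
strictly increasing, and `U₁` has the same joint law with `η` as `U + ξ₁`. Since `ξ_d` is
independent of `(η, U)`, the tilted law of `U + ξ_d` is the tilted law of `U` convolved with
the law of `ξ_d`; as `ξ₀ ~ ξ₁ + V` with `V ⊥ ξ₁`, the tilted law of `U + ξ₀` is that of
`U + ξ₁` convolved with the law of `V`, and convolution preserves CDF dominance. The preimage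
of `(-∞, y]` under the continuous monotone `q(0, ·)` is a closed lower set, which brings the
dominance back to `Y₀`.

Condition S₁ is S₁* for the weights `∑ ℓ, w ℓ · 1{h ℓ t = 1} / P(h ℓ η = 1)`: by independence
of `Z` and `(Y₀, Y₁, η)`, `P[Y_d ≤ y | D = 1, Z = ℓ]` is the average of `F_d y` over the types
selected by `h ℓ`.
-/

open MeasureTheory ProbabilityTheory Filter Set

open scoped ENNReal

section DensityOfSubMeasure

variable {T : Type*} [MeasurableSpace T] {ν m : Measure T} [IsFiniteMeasure ν] {f : T → ℝ}

theorem ae_nonneg_of_forall_setIntegral_nonneg_of_integrableOn (hf : Measurable f)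
    (h : ∀ s, MeasurableSet s → IntegrableOn f s ν → 0 ≤ ∫ t in s, f t ∂ν) : 0 ≤ᵐ[ν] f := by
  have hcover : ⋃ n : ℕ, {t | |f t| ≤ n} = univ :=
    iUnion_eq_univ_iff.2 fun t => ⟨⌈|f t|⌉₊, show |f t| ≤ _ from Nat.le_ceil _⟩
  suffices ∀ᵐ t ∂ν.restrict (⋃ n : ℕ, {t | |f t| ≤ n}), 0 ≤ f t by
    rwa [hcover, Measure.restrict_univ] at this
  refine (ae_restrict_iUnion_iff _ _).2 fun n => ?_
  have hmeas : MeasurableSet {t | |f t| ≤ n} := measurableSet_le hf.abs measurable_const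
  have hint : IntegrableOn f {t | |f t| ≤ n} ν :=
    (integrableOn_const (C := (n : ℝ))).mono' hf.aestronglyMeasurable
      ((ae_restrict_mem hmeas).mono fun t ht => by rwa [Real.norm_eq_abs])
  refine ae_nonneg_of_forall_setIntegral_nonneg hint fun s hs _ => ?_
  rw [Measure.restrict_restrict hs]
  exact h _ (hs.inter hmeas) (hint.mono_set inter_subset_right)

theorem ae_mem_Icc_of_setIntegral_eq_measureReal (hf : Measurable f) (hm : m ≤ ν)
    (h : ∀ s, MeasurableSet s → ∫ t in s, f t ∂ν = m.real s) : ∀ᵐ t ∂ν, f t ∈ Icc 0 1 := by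
  have hnonneg := ae_nonneg_of_forall_setIntegral_nonneg_of_integrableOn hf fun s hs _ =>
    (h s hs).symm ▸ measureReal_nonneg
  have hle := ae_nonneg_of_forall_setIntegral_nonneg_of_integrableOn (f := fun t => 1 - f t)
    (measurable_const.sub hf) fun s hs hint => by
      have hone : IntegrableOn (fun _ => (1 : ℝ)) s ν := integrableOn_const
      have hfint : IntegrableOn f s ν := by
        convert hone.sub hint using 1
        ext t; simp
      rw [integral_sub hone hfint, setIntegral_const, h s hs, smul_eq_mul, mul_one, sub_nonneg]
      exact ENNReal.toReal_mono (measure_ne_top ν s) (Measure.le_iff'.1 hm s)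
  filter_upwards [hnonneg, hle] with t h0 h1
  exact ⟨h0, sub_nonneg.1 h1⟩

theorem integrable_of_setIntegral_eq_measureReal (hf : Measurable f) (hm : m ≤ ν)
    (h : ∀ s, MeasurableSet s → ∫ t in s, f t ∂ν = m.real s) : Integrable f ν :=
  (integrable_const (1 : ℝ)).mono' hf.aestronglyMeasurable
    ((ae_mem_Icc_of_setIntegral_eq_measureReal hf hm h).mono fun t ht => by
      rw [Real.norm_eq_abs, abs_le]
      exact ⟨by linarith [ht.1], ht.2⟩)

theorem withDensity_ofReal_eq_of_setIntegral_eq_measureReal (hf : Measurable f) (hm : m ≤ ν)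
    (h : ∀ s, MeasurableSet s → ∫ t in s, f t ∂ν = m.real s) :
    ν.withDensity (fun t => ENNReal.ofReal (f t)) = m := by
  have hf01 := ae_mem_Icc_of_setIntegral_eq_measureReal hf hm h
  ext s hs
  rw [withDensity_apply _ hs, ← ofReal_integral_eq_lintegral_ofReal
    (integrable_of_setIntegral_eq_measureReal hf hm h).integrableOn
    (ae_restrict_of_ae (hf01.mono fun t ht => ht.1)), h s hs, measureReal_def,
    ENNReal.ofReal_toReal (ne_top_of_le_ne_top (measure_ne_top ν s) (Measure.le_iff'.1 hm s))]

end DensityOfSubMeasure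

section CDFDominance

theorem IsLowerSet.eq_empty_or_univ_or_Iic_of_isClosed {s : Set ℝ} (hs : IsLowerSet s)
    (hc : IsClosed s) : s = ∅ ∨ s = univ ∨ ∃ c, s = Iic c := by
  rcases s.eq_empty_or_nonempty with hempty | hne
  · exact Or.inl hempty
  by_cases hbdd : BddAbove s
  · refine Or.inr (Or.inr ⟨sSup s, Subset.antisymm (fun x hx => le_csSup hbdd hx) ?_⟩)
    exact fun x hx => hs hx (hc.csSup_mem hne hbdd)
  · refine Or.inr (Or.inl (eq_univ_of_forall fun x => ?_))
    obtain ⟨a, ha, hxa⟩ := not_bddAbove_iff.1 hbdd x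
    exact hs hxa.le ha

variable {m₁ m₂ : Measure ℝ}

theorem measure_univ_le_of_forall_measure_Iic_le (h : ∀ u, m₁ (Iic u) ≤ m₂ (Iic u)) :
    m₁ univ ≤ m₂ univ := by
  have hcover : ⋃ n : ℕ, Iic (n : ℝ) = univ :=
    iUnion_eq_univ_iff.2 fun x => ⟨⌈x⌉₊, Nat.le_ceil x⟩
  have hmono : Monotone fun n : ℕ => Iic (n : ℝ) := fun a b hab =>
    Iic_subset_Iic.2 (Nat.cast_le.2 hab)
  rw [← hcover, hmono.measure_iUnion, hmono.measure_iUnion]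
  exact iSup_mono fun n => h n

theorem map_measure_Iic_le_of_continuous_monotone (h : ∀ u, m₁ (Iic u) ≤ m₂ (Iic u)) {q : ℝ → ℝ}
    (hq : Continuous q) (hmono : Monotone q) (y : ℝ) :
    m₁.map q (Iic y) ≤ m₂.map q (Iic y) := by
  rw [Measure.map_apply hq.measurable measurableSet_Iic,
    Measure.map_apply hq.measurable measurableSet_Iic]
  rcases (isLowerSet_Iic y).preimage hmono |>.eq_empty_or_univ_or_Iic_of_isClosed
    (isClosed_Iic.preimage hq) with hA | hA | ⟨c, hA⟩ <;> rw [hA]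
  · simp
  · exact measure_univ_le_of_forall_measure_Iic_le h
  · exact h c

theorem measure_Iic_le_of_map_strictMono {q : ℝ → ℝ} (hq : StrictMono q)
    (h : ∀ y, m₁.map q (Iic y) ≤ m₂.map q (Iic y)) (u : ℝ) : m₁ (Iic u) ≤ m₂ (Iic u) := by
  have hpre : q ⁻¹' Iic (q u) = Iic u := ext fun x => hq.le_iff_le
  simpa only [Measure.map_apply hq.monotone.measurable measurableSet_Iic, hpre] using h (q u)

theorem conv_apply_Iic (m ρ : Measure ℝ) [SFinite m] [SFinite ρ] (u : ℝ) :
    (m ∗ ρ) (Iic u) = ∫⁻ e, m (Iic (u - e)) ∂ρ := by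
  rw [Measure.conv, Measure.map_apply measurable_add measurableSet_Iic,
    Measure.prod_apply_symm (measurable_add measurableSet_Iic)]
  congr! with e
  ext x
  simp [le_sub_iff_add_le]

theorem conv_measure_Iic_le [SFinite m₁] [SFinite m₂] (h : ∀ u, m₁ (Iic u) ≤ m₂ (Iic u))
    (ρ : Measure ℝ) [SFinite ρ] (u : ℝ) : (m₁ ∗ ρ) (Iic u) ≤ (m₂ ∗ ρ) (Iic u) := by
  rw [conv_apply_Iic, conv_apply_Iic]
  exact lintegral_mono fun e => h (u - e)

end CDFDominance

section TiltedLaw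

variable {Ω : Type*} [MeasurableSpace Ω] {μ : Measure Ω} {T : Type*} [MeasurableSpace T]
  {η : Ω → T} {g : T → ℝ≥0∞}

noncomputable def tiltedLaw (μ : Measure Ω) (η : Ω → T) (g : T → ℝ≥0∞) (X : Ω → ℝ) :
    Measure ℝ :=
  (μ.withDensity fun ω => g (η ω)).map X

theorem tiltedLaw_add_eq_conv [IsFiniteMeasure μ] (hη : Measurable η) (hg : Measurable g)
    {U ξ : Ω → ℝ} (hU : Measurable U) (hξ : Measurable ξ)
    (hind : IndepFun ξ (fun ω => (η ω, U ω)) μ) :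
    tiltedLaw μ η g (U + ξ) = tiltedLaw μ η g U ∗ μ.map ξ := by
  refine Measure.ext_of_lintegral _ fun f hf => ?_
  set Φ : ℝ → ℝ≥0∞ := fun x => ∫⁻ e, f (x + e) ∂(μ.map ξ)
  have hΦ : Measurable Φ := (hf.comp measurable_add).lintegral_prod_right'
  have hH : Measurable fun p : ℝ × (T × ℝ) => g p.2.1 * f (p.2.2 + p.1) := by fun_prop
  have hprod : μ.map (fun ω => (ξ ω, (η ω, U ω))) = (μ.map ξ).prod (μ.map fun ω => (η ω, U ω)) :=
    (indepFun_iff_map_prod_eq_prod_map_map hξ.aemeasurable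
      (hη.prodMk hU).aemeasurable).1 hind
  calc ∫⁻ x, f x ∂tiltedLaw μ η g (U + ξ)
      = ∫⁻ ω, g (η ω) * f (U ω + ξ ω) ∂μ := by
        rw [tiltedLaw, lintegral_map hf (hU.add hξ)]
        exact lintegral_withDensity_eq_lintegral_mul _ (hg.comp hη) (hf.comp (hU.add hξ))
    _ = ∫⁻ p, ∫⁻ e, g p.1 * f (p.2 + e) ∂(μ.map ξ) ∂(μ.map fun ω => (η ω, U ω)) := by
        rw [← lintegral_prod_symm _ hH.aemeasurable, ← hprod,
          lintegral_map hH (hξ.prodMk (hη.prodMk hU))]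
    _ = ∫⁻ ω, g (η ω) * Φ (U ω) ∂μ := by
        rw [lintegral_map (by fun_prop) (hη.prodMk hU)]
        exact lintegral_congr fun ω => lintegral_const_mul _ (hf.comp (measurable_const_add _))
    _ = ∫⁻ x, f x ∂(tiltedLaw μ η g U ∗ μ.map ξ) := by
        rw [Measure.lintegral_conv hf, tiltedLaw, lintegral_map hΦ hU]
        exact (lintegral_withDensity_eq_lintegral_mul _ (hg.comp hη) (hΦ.comp hU)).symm

instance [SFinite μ] {X : Ω → ℝ} : SFinite (tiltedLaw μ η g X) := by
  unfold tiltedLaw; infer_instance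

theorem isFiniteMeasure_tiltedLaw_ofReal (hη : Measurable η) {w : T → ℝ}
    (hw : Integrable w (μ.map η)) (X : Ω → ℝ) :
    IsFiniteMeasure (tiltedLaw μ η (fun t => ENNReal.ofReal (w t)) X) := by
  have : IsFiniteMeasure (μ.withDensity fun ω => ENNReal.ofReal (w (η ω))) :=
    isFiniteMeasure_withDensity_ofReal (hw.comp_measurable hη).hasFiniteIntegral
  unfold tiltedLaw; infer_instance

theorem tiltedLaw_Iic_congr (hη : Measurable η) (hg : Measurable g)
    {X X' : Ω → ℝ} (hX : Measurable X) (hX' : Measurable X') {u : ℝ}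
    (h : ∀ s, MeasurableSet s → μ (X ⁻¹' Iic u ∩ η ⁻¹' s) = μ (X' ⁻¹' Iic u ∩ η ⁻¹' s)) :
    tiltedLaw μ η g X (Iic u) = tiltedLaw μ η g X' (Iic u) := by
  have hlaw : (μ.restrict (X ⁻¹' Iic u)).map η = (μ.restrict (X' ⁻¹' Iic u)).map η := by
    ext s hs
    rw [Measure.map_apply hη hs, Measure.map_apply hη hs, Measure.restrict_apply (hη hs),
      Measure.restrict_apply (hη hs), inter_comm, h s hs, inter_comm]
  rw [tiltedLaw, tiltedLaw, Measure.map_apply hX measurableSet_Iic,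
    Measure.map_apply hX' measurableSet_Iic, withDensity_apply _ (hX measurableSet_Iic),
    withDensity_apply _ (hX' measurableSet_Iic), ← lintegral_map hg hη, ← lintegral_map hg hη,
    hlaw]

theorem tiltedLaw_Iic_le_of_model [IsFiniteMeasure μ] {U U0 U1 ξ0 ξ1 V Y0 Y1 : Ω → ℝ}
    {q0 q1 : ℝ → ℝ} (hη : Measurable η) (hU : Measurable U) (hU0 : Measurable U0)
    (hU1 : Measurable U1) (hξ0 : Measurable ξ0) (hξ1 : Measurable ξ1) (hV : Measurable V)
    (hq0 : Continuous q0) (hq0m : Monotone q0) (hq1 : StrictMono q1)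
    (hY0 : ∀ ω, Y0 ω = q0 (U0 ω)) (hY1 : ∀ ω, Y1 ω = q1 (U1 ω))
    (hU0law : ∀ u s, MeasurableSet s →
      μ (U0 ⁻¹' Iic u ∩ η ⁻¹' s) = μ ((U + ξ0) ⁻¹' Iic u ∩ η ⁻¹' s))
    (hU1law : ∀ u s, MeasurableSet s →
      μ (U1 ⁻¹' Iic u ∩ η ⁻¹' s) = μ ((U + ξ1) ⁻¹' Iic u ∩ η ⁻¹' s))
    (hξ0ind : IndepFun ξ0 (fun ω => (η ω, U ω)) μ)
    (hξ1ind : IndepFun ξ1 (fun ω => (η ω, U ω)) μ)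
    (hVind : IndepFun ξ1 V μ) (hnoise : μ.map ξ0 = μ.map (ξ1 + V))
    {g' : T → ℝ≥0∞} (hg : Measurable g) (hg' : Measurable g')
    (h1 : ∀ y, tiltedLaw μ η g Y1 (Iic y) ≤ tiltedLaw μ η g' Y1 (Iic y)) (y : ℝ) :
    tiltedLaw μ η g Y0 (Iic y) ≤ tiltedLaw μ η g' Y0 (Iic y) := by
  have hY0map : ∀ k, tiltedLaw μ η k Y0 = (tiltedLaw μ η k U0).map q0 := fun k => by
    rw [tiltedLaw, tiltedLaw, Measure.map_map hq0.measurable hU0, funext hY0]; rfl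
  have hY1map : ∀ k, tiltedLaw μ η k Y1 = (tiltedLaw μ η k U1).map q1 := fun k => by
    rw [tiltedLaw, tiltedLaw, Measure.map_map hq1.monotone.measurable hU1, funext hY1]; rfl
  have hconv : ∀ k, Measurable k →
      tiltedLaw μ η k (U + ξ0) = tiltedLaw μ η k (U + ξ1) ∗ μ.map V := fun k hk => by
    rw [tiltedLaw_add_eq_conv hη hk hU hξ0 hξ0ind, hnoise, hVind.map_add_eq_map_conv_map hξ1 hV,
      ← Measure.conv_assoc, tiltedLaw_add_eq_conv hη hk hU hξ1 hξ1ind]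
  have hUξ1le : ∀ u, tiltedLaw μ η g (U + ξ1) (Iic u) ≤ tiltedLaw μ η g' (U + ξ1) (Iic u) :=
    fun u => by
      rw [← tiltedLaw_Iic_congr hη hg hU1 (hU.add hξ1) (hU1law u),
        ← tiltedLaw_Iic_congr hη hg' hU1 (hU.add hξ1) (hU1law u)]
      exact measure_Iic_le_of_map_strictMono hq1 (by simpa only [hY1map] using h1) u
  have hU0le : ∀ u, tiltedLaw μ η g U0 (Iic u) ≤ tiltedLaw μ η g' U0 (Iic u) := fun u => by
    rw [tiltedLaw_Iic_congr hη hg hU0 (hU.add hξ0) (hU0law u),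
      tiltedLaw_Iic_congr hη hg' hU0 (hU.add hξ0) (hU0law u), hconv g hg, hconv g' hg']
    exact conv_measure_Iic_le hUξ1le _ u
  rw [hY0map, hY0map]
  exact map_measure_Iic_le_of_continuous_monotone hU0le hq0 hq0m y

end TiltedLaw

section Representation

variable {Ω : Type*} [MeasurableSpace Ω] {μ : Measure Ω} {T : Type*} [MeasurableSpace T]
  {η : Ω → T} {A : Set Ω} {F : T → ℝ}

theorem setIntegral_eq_measureReal_map_restrict (hη : Measurable η)
    (hrep : ∀ s, MeasurableSet s → pr μ (A ∩ η ⁻¹' s) = ∫ t in s, F t ∂(μ.map η))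
    {s : Set T} (hs : MeasurableSet s) :
    ∫ t in s, F t ∂(μ.map η) = ((μ.restrict A).map η).real s := by
  rw [← hrep s hs, measureReal_def, Measure.map_apply hη hs, Measure.restrict_apply (hη hs),
    inter_comm, pr]

theorem integrable_of_pr_eq_setIntegral [IsFiniteMeasure μ] (hη : Measurable η)
    (hF : Measurable F)
    (hrep : ∀ s, MeasurableSet s → pr μ (A ∩ η ⁻¹' s) = ∫ t in s, F t ∂(μ.map η)) :
    Integrable F (μ.map η) :=
  integrable_of_setIntegral_eq_measureReal hF (Measure.map_mono Measure.restrict_le_self hη)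
    fun _ hs => setIntegral_eq_measureReal_map_restrict hη hrep hs

theorem cpr_preimage_eq_setAverage (hη : Measurable η)
    (hrep : ∀ s, MeasurableSet s → pr μ (A ∩ η ⁻¹' s) = ∫ t in s, F t ∂(μ.map η))
    {S : Set T} (hS : MeasurableSet S) : cpr μ A (η ⁻¹' S) = ⨍ t in S, F t ∂(μ.map η) := by
  rw [cpr, hrep S hS, setAverage_eq, map_measureReal_apply hη hS, smul_eq_mul,
    div_eq_inv_mul]
  rfl

theorem integral_mul_eq_toReal_tiltedLaw_Iic [IsFiniteMeasure μ] (hη : Measurable η)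
    {Y : Ω → ℝ} (hY : Measurable Y) (hF : Measurable F) {y : ℝ}
    (hrep : ∀ s, MeasurableSet s → pr μ (Y ⁻¹' Iic y ∩ η ⁻¹' s) = ∫ t in s, F t ∂(μ.map η))
    {w : T → ℝ} (hw : Measurable w) (hw0 : ∀ t, 0 ≤ w t) :
    ∫ t, w t * F t ∂(μ.map η) =
      (tiltedLaw μ η (fun t => ENNReal.ofReal (w t)) Y (Iic y)).toReal := by
  have hA : MeasurableSet (Y ⁻¹' Iic y) := hY measurableSet_Iic
  have hm : (μ.restrict (Y ⁻¹' Iic y)).map η ≤ μ.map η :=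
    Measure.map_mono Measure.restrict_le_self hη
  have hrep' := fun s (hs : MeasurableSet s) =>
    setIntegral_eq_measureReal_map_restrict hη hrep hs
  have hF0 : 0 ≤ᵐ[μ.map η] F :=
    (ae_mem_Icc_of_setIntegral_eq_measureReal hF hm hrep').mono fun t ht => ht.1
  rw [tiltedLaw, Measure.map_apply hY measurableSet_Iic, withDensity_apply _ hA,
    ← lintegral_map hw.ennreal_ofReal hη,
    ← withDensity_ofReal_eq_of_setIntegral_eq_measureReal hF hm hrep',
    lintegral_withDensity_eq_lintegral_mul _ hF.ennreal_ofReal hw.ennreal_ofReal,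
    integral_eq_lintegral_of_nonneg_ae (hF0.mono fun t ht => mul_nonneg (hw0 t) ht)
      (hw.mul hF).aestronglyMeasurable]
  congr 1
  refine lintegral_congr fun t => ?_
  rw [Pi.mul_apply, ENNReal.ofReal_mul (hw0 t), mul_comm]

end Representation

section Conditions

variable {T : Type*} [MeasurableSpace T]

def CondS1Star (ν : Measure T) (F0 F1 : ℝ → T → ℝ) : Prop :=
  ∀ w wt : T → ℝ, Measurable w → Measurable wt →
    (∀ t, 0 ≤ w t) → (∀ t, 0 ≤ wt t) →
    (∫ t, w t ∂ν) = 1 → (∫ t, wt t ∂ν) = 1 →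
    (∀ y : ℝ, (∫ t, w t * F1 y t ∂ν) ≤ ∫ t, wt t * F1 y t ∂ν) →
    (∀ y : ℝ, (∫ t, w t * F0 y t ∂ν) ≤ ∫ t, wt t * F0 y t ∂ν)

theorem condS1Star_of_tiltedLaw_Iic_le {Ω : Type*} [MeasurableSpace Ω] {μ : Measure Ω}
    [IsFiniteMeasure μ] {η : Ω → T} (hη : Measurable η) {Y0 Y1 : Ω → ℝ} (hY0 : Measurable Y0)
    (hY1 : Measurable Y1) {F0 F1 : ℝ → T → ℝ} (hF0meas : ∀ y, Measurable (F0 y))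
    (hF1meas : ∀ y, Measurable (F1 y))
    (hF0 : ∀ y s, MeasurableSet s → pr μ (Y0 ⁻¹' Iic y ∩ η ⁻¹' s) = ∫ t in s, F0 y t ∂(μ.map η))
    (hF1 : ∀ y s, MeasurableSet s → pr μ (Y1 ⁻¹' Iic y ∩ η ⁻¹' s) = ∫ t in s, F1 y t ∂(μ.map η))
    (hdom : ∀ g g' : T → ℝ≥0∞, Measurable g → Measurable g' →
      (∀ y, tiltedLaw μ η g Y1 (Iic y) ≤ tiltedLaw μ η g' Y1 (Iic y)) →
      ∀ y, tiltedLaw μ η g Y0 (Iic y) ≤ tiltedLaw μ η g' Y0 (Iic y)) :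
    CondS1Star (μ.map η) F0 F1 := by
  intro w wt hw hwt hw0 hwt0 hw1 hwt1 hle1 y
  have hfin := isFiniteMeasure_tiltedLaw_ofReal hη
    (Integrable.of_integral_ne_zero (hw1 ▸ one_ne_zero))
  have hfin' := isFiniteMeasure_tiltedLaw_ofReal hη
    (Integrable.of_integral_ne_zero (hwt1 ▸ one_ne_zero))
  rw [integral_mul_eq_toReal_tiltedLaw_Iic hη hY0 (hF0meas y) (hF0 y) hw hw0,
    integral_mul_eq_toReal_tiltedLaw_Iic hη hY0 (hF0meas y) (hF0 y) hwt hwt0]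
  refine ENNReal.toReal_mono (measure_ne_top _ _)
    (hdom _ _ hw.ennreal_ofReal hwt.ennreal_ofReal (fun y => ?_) y)
  have hle1y := hle1 y
  rwa [integral_mul_eq_toReal_tiltedLaw_Iic hη hY1 (hF1meas y) (hF1 y) hw hw0,
    integral_mul_eq_toReal_tiltedLaw_Iic hη hY1 (hF1meas y) (hF1 y) hwt hwt0,
    ENNReal.toReal_le_toReal (measure_ne_top _ _) (measure_ne_top _ _)] at hle1y

variable {ν : Measure T} {ι : Type*} [Fintype ι] {S : ι → Set T}

noncomputable def mixtureDensity (ν : Measure T) (S : ι → Set T) (w : ι → ℝ) (t : T) : ℝ :=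
  ∑ i, w i * (S i).indicator (fun _ => (ν.real (S i))⁻¹) t

theorem measurable_mixtureDensity (hS : ∀ i, MeasurableSet (S i)) (w : ι → ℝ) :
    Measurable (mixtureDensity ν S w) :=
  Finset.measurable_sum _ fun i _ => (measurable_const.indicator (hS i)).const_mul _

theorem mixtureDensity_nonneg {w : ι → ℝ} (hw : ∀ i, 0 ≤ w i) (t : T) :
    0 ≤ mixtureDensity ν S w t :=
  Finset.sum_nonneg fun i _ =>
    mul_nonneg (hw i) (indicator_nonneg (fun _ _ => inv_nonneg.2 measureReal_nonneg) t)

theorem integral_mixtureDensity_mul (hS : ∀ i, MeasurableSet (S i)) (w : ι → ℝ) {F : T → ℝ}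
    (hF : Integrable F ν) :
    ∫ t, mixtureDensity ν S w t * F t ∂ν = ∑ i, w i * ⨍ t in S i, F t ∂ν := by
  have hterm : ∀ i t, w i * (S i).indicator (fun _ => (ν.real (S i))⁻¹) t * F t
      = (S i).indicator (fun t => w i * ((ν.real (S i))⁻¹ * F t)) t := fun i t => by
    by_cases ht : t ∈ S i <;> simp [ht, mul_assoc]
  simp_rw [mixtureDensity, Finset.sum_mul, hterm]
  rw [integral_finsetSum _ fun i _ => ((hF.const_mul _).const_mul _).indicator (hS i)]
  refine Finset.sum_congr rfl fun i _ => ?_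
  rw [integral_indicator (hS i), integral_const_mul, integral_const_mul, setAverage_eq,
    smul_eq_mul]

theorem integral_mixtureDensity [IsFiniteMeasure ν] (hS : ∀ i, MeasurableSet (S i))
    (hSpos : ∀ i, ν (S i) ≠ 0) (w : ι → ℝ) : ∫ t, mixtureDensity ν S w t ∂ν = ∑ i, w i := by
  simpa [setAverage_const (hSpos _) (measure_ne_top _ _)] using
    integral_mixtureDensity_mul hS w (integrable_const (μ := ν) (1 : ℝ))

theorem sum_mul_setAverage_le_of_condS1Star [IsFiniteMeasure ν] {F0 F1 : ℝ → T → ℝ}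
    (hS1 : CondS1Star ν F0 F1) (hF0 : ∀ y, Integrable (F0 y) ν) (hF1 : ∀ y, Integrable (F1 y) ν)
    (hS : ∀ i, MeasurableSet (S i)) (hSpos : ∀ i, ν (S i) ≠ 0) {w wt : ι → ℝ}
    (hw0 : ∀ i, 0 ≤ w i) (hwt0 : ∀ i, 0 ≤ wt i) (hw1 : ∑ i, w i = 1) (hwt1 : ∑ i, wt i = 1)
    (hle : ∀ y, ∑ i, w i * ⨍ t in S i, F1 y t ∂ν ≤ ∑ i, wt i * ⨍ t in S i, F1 y t ∂ν) (y : ℝ) :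
    ∑ i, w i * ⨍ t in S i, F0 y t ∂ν ≤ ∑ i, wt i * ⨍ t in S i, F0 y t ∂ν := by
  have key := hS1 _ _ (measurable_mixtureDensity hS w) (measurable_mixtureDensity hS wt)
    (mixtureDensity_nonneg hw0) (mixtureDensity_nonneg hwt0)
    (by rw [integral_mixtureDensity hS hSpos, hw1]) (by rw [integral_mixtureDensity hS hSpos, hwt1])
    (fun y => by simpa only [integral_mixtureDensity_mul hS _ (hF1 y)] using hle y) y
  simpa only [integral_mixtureDensity_mul hS _ (hF0 y)] using key

end Conditions

section Independence

variable {Ω : Type*} [MeasurableSpace Ω] {μ : Measure Ω}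

theorem measure_eq_of_forall_pr_inter_fiber_eq [IsFiniteMeasure μ] {ι : Type*} [Fintype ι]
    [MeasurableSpace ι] [MeasurableSingletonClass ι] {Z : Ω → ι} (hZ : Measurable Z) {A B : Set Ω}
    (h : ∀ i, pr μ (A ∩ Z ⁻¹' {i}) = pr μ (B ∩ Z ⁻¹' {i})) : μ A = μ B := by
  have hsum : ∀ C, μ C = ∑ i, μ (C ∩ Z ⁻¹' {i}) := fun C => by
    have := sum_measure_preimage_singleton (μ := μ.restrict C) Finset.univ fun i _ =>
      hZ (measurableSet_singleton i)
    simpa [Measure.restrict_apply (hZ (measurableSet_singleton _)), inter_comm] using this.symm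
  rw [hsum A, hsum B]
  exact Finset.sum_congr rfl fun i _ =>
    (ENNReal.toReal_eq_toReal_iff' (measure_ne_top _ _) (measure_ne_top _ _)).1 (h i)

theorem cpr_inter_of_indepFun [IsFiniteMeasure μ] {β γ : Type*} [MeasurableSpace β]
    [mγ : MeasurableSpace γ] {Z : Ω → β} {X : Ω → γ} (hind : IndepFun Z X μ) {r : Set β}
    (hr : MeasurableSet r) (hZ : μ (Z ⁻¹' r) ≠ 0) {A B : Set Ω}
    (hA : MeasurableSet[mγ.comap X] A) (hB : MeasurableSet[mγ.comap X] B) :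
    cpr μ A (Z ⁻¹' r ∩ B) = cpr μ A B := by
  rw [cpr, cpr, pr, pr, inter_left_comm, hind.meas_inter ⟨r, hr, rfl⟩ (hA.inter hB),
    hind.meas_inter ⟨r, hr, rfl⟩ hB, ENNReal.toReal_mul, ENNReal.toReal_mul,
    mul_div_mul_left _ _ (ENNReal.toReal_ne_zero.2 ⟨hZ, measure_ne_top _ _⟩), pr, pr]

theorem sum_mul_cpr_le_of_condS1Star [IsFiniteMeasure μ] {T : Type*} [MeasurableSpace T]
    {ι : Type*} [Fintype ι] [MeasurableSpace ι] [MeasurableSingletonClass ι] {η : Ω → T}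
    {Z : Ω → ι} {h : ι → T → ℕ} {D : Ω → ℕ} {Y0 Y1 : Ω → ℝ} {F0 F1 : ℝ → T → ℝ}
    (hη : Measurable η) (hh : ∀ i, Measurable (h i)) (hD : ∀ ω, D ω = h (Z ω) (η ω))
    (hind : IndepFun Z (fun ω => (Y0 ω, Y1 ω, η ω)) μ)
    (hpos : ∀ i, 0 < pr μ {ω | D ω = 1 ∧ Z ω = i})
    (hF0meas : ∀ y, Measurable (F0 y)) (hF1meas : ∀ y, Measurable (F1 y))
    (hF0 : ∀ y s, MeasurableSet s → pr μ (Y0 ⁻¹' Iic y ∩ η ⁻¹' s) = ∫ t in s, F0 y t ∂(μ.map η))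
    (hF1 : ∀ y s, MeasurableSet s → pr μ (Y1 ⁻¹' Iic y ∩ η ⁻¹' s) = ∫ t in s, F1 y t ∂(μ.map η))
    (hS1 : CondS1Star (μ.map η) F0 F1) {w wt : ι → ℝ} (hw0 : ∀ i, 0 ≤ w i)
    (hwt0 : ∀ i, 0 ≤ wt i) (hw1 : ∑ i, w i = 1) (hwt1 : ∑ i, wt i = 1)
    (hle : ∀ y, ∑ i, w i * cpr μ {ω | Y1 ω ≤ y} {ω | D ω = 1 ∧ Z ω = i}
      ≤ ∑ i, wt i * cpr μ {ω | Y1 ω ≤ y} {ω | D ω = 1 ∧ Z ω = i}) (y : ℝ) :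
    ∑ i, w i * cpr μ {ω | Y0 ω ≤ y} {ω | D ω = 1 ∧ Z ω = i}
      ≤ ∑ i, wt i * cpr μ {ω | Y0 ω ≤ y} {ω | D ω = 1 ∧ Z ω = i} := by
  set X : Ω → ℝ × ℝ × T := fun ω => (Y0 ω, Y1 ω, η ω)
  set S : ι → Set T := fun i => h i ⁻¹' {1}
  have hS : ∀ i, MeasurableSet (S i) := fun i => hh i (measurableSet_singleton 1)
  have hsel : ∀ i, {ω | D ω = 1 ∧ Z ω = i} = Z ⁻¹' {i} ∩ η ⁻¹' S i := fun i => by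
    ext ω
    simp only [mem_ofPred_eq, mem_inter_iff, mem_preimage, mem_singleton_iff, S, hD]
    exact ⟨fun ⟨h1, h2⟩ => ⟨h2, h2 ▸ h1⟩, fun ⟨h2, h1⟩ => ⟨h2 ▸ h1, h2⟩⟩
  have hsel_pos : ∀ i, μ (Z ⁻¹' {i} ∩ η ⁻¹' S i) ≠ 0 := fun i => by
    have hposi := hpos i
    rw [hsel, pr] at hposi
    exact (ENNReal.toReal_pos_iff.1 hposi).1.ne'
  have hX : Measurable[MeasurableSpace.comap X inferInstance] X := Measurable.of_comap_le le_rfl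
  have hcpr : ∀ (Y : Ω → ℝ) (F : ℝ → T → ℝ), Measurable[MeasurableSpace.comap X inferInstance] Y →
      (∀ y s, MeasurableSet s → pr μ (Y ⁻¹' Iic y ∩ η ⁻¹' s) = ∫ t in s, F y t ∂(μ.map η)) →
      ∀ y i, cpr μ {ω | Y ω ≤ y} {ω | D ω = 1 ∧ Z ω = i} = ⨍ t in S i, F y t ∂(μ.map η) :=
    fun Y F hY hrep y i => by
      change cpr μ (Y ⁻¹' Iic y) _ = _
      rw [hsel, cpr_inter_of_indepFun hind (measurableSet_singleton i)
        (fun h0 => hsel_pos i (measure_mono_null inter_subset_left h0)) (hY measurableSet_Iic)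
        (hX.snd.snd (hS i))]
      exact cpr_preimage_eq_setAverage hη (hrep y) (hS i)
  simp only [hcpr Y0 F0 hX.fst hF0, hcpr Y1 F1 hX.snd.fst hF1] at hle ⊢
  refine sum_mul_setAverage_le_of_condS1Star hS1
    (fun y => integrable_of_pr_eq_setIntegral hη (hF0meas y) (hF0 y))
    (fun y => integrable_of_pr_eq_setIntegral hη (hF1meas y) (hF1 y)) hS (fun i => ?_)
    hw0 hwt0 hw1 hwt1 hle y
  rw [Measure.map_apply hη (hS i)]
  exact fun h0 => hsel_pos i (measure_mono_null inter_subset_right h0)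

end Independence

theorem model1_implies_condS1star_and_condS1_general
    {Ω : Type*} [MeasurableSpace Ω] (μ : Measure Ω) [IsProbabilityMeasure μ]
    {T : Type*} [MeasurableSpace T]
    (L : ℕ)
    (U U0 U1 ξ0 ξ1 V : Ω → ℝ) (η : Ω → T) (Z : Ω → Fin L)
    (q : ℕ → ℝ → ℝ) (h : Fin L → T → ℕ) (D : Ω → ℕ) (Y0 Y1 : Ω → ℝ)
    (hmU : Measurable U) (hmU0 : Measurable U0) (hmU1 : Measurable U1)
    (hmξ0 : Measurable ξ0) (hmξ1 : Measurable ξ1) (hmV : Measurable V)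
    (hmη : Measurable η) (hmZ : Measurable Z) (hmh : ∀ ℓ, Measurable (h ℓ))
    -- Model 1(i): outcome equation with q(d,·) continuous and strictly increasing,
    -- and selection D = h(Z, η)
    (hq : ∀ d, Continuous (q d) ∧ StrictMono (q d))
    (hD : ∀ ω, D ω = h (Z ω) (η ω))
    (hY0 : ∀ ω, Y0 ω = q 0 (U0 ω)) (hY1 : ∀ ω, Y1 ω = q 1 (U1 ω))
    -- Model 1(ii): conditional on (η, Z), U_d =ᵈ U + ξ_d with ξ_d ⊥ (η, U), ξ_d has a density
    (hξ0indep : IndepFun ξ0 (fun ω => (η ω, U ω)) μ)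
    (hξ1indep : IndepFun ξ1 (fun ω => (η ω, U ω)) μ)
    (hdist0 : ∀ (u : ℝ) (s : Set T), MeasurableSet s → ∀ ℓ : Fin L,
      pr μ {ω | U0 ω ≤ u ∧ η ω ∈ s ∧ Z ω = ℓ}
        = pr μ {ω | U ω + ξ0 ω ≤ u ∧ η ω ∈ s ∧ Z ω = ℓ})
    (hdist1 : ∀ (u : ℝ) (s : Set T), MeasurableSet s → ∀ ℓ : Fin L,
      pr μ {ω | U1 ω ≤ u ∧ η ω ∈ s ∧ Z ω = ℓ}
        = pr μ {ω | U ω + ξ1 ω ≤ u ∧ η ω ∈ s ∧ Z ω = ℓ})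
    -- Model 1(iii): conditional on Z, ξ₀ =ᵈ ξ₁ + V with V ⊥ ξ₁ and V has a density
    (hVindep : IndepFun V ξ1 μ)
    (hnoise : ∀ (s : ℝ) (ℓ : Fin L),
      pr μ {ω | ξ0 ω ≤ s ∧ Z ω = ℓ} = pr μ {ω | ξ1 ω + V ω ≤ s ∧ Z ω = ℓ})
    -- instrument exogeneity (Assumption Z): Z ⊥ (Y₀, Y₁) (jointly with η for Assumption D)
    (hindepZ : IndepFun Z (fun ω => (Y0 ω, Y1 ω, η ω)) μ)
    (hposD1Z : ∀ ℓ : Fin L, 0 < pr μ {ω | D ω = 1 ∧ Z ω = ℓ})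
    -- the type distribution and the conditional CDFs of Y₀, Y₁ given η
    (ν : Measure T) (hν : ν = μ.map η)
    (F0 F1 : ℝ → T → ℝ)
    (hF0meas : ∀ y, Measurable (F0 y)) (hF1meas : ∀ y, Measurable (F1 y))
    (hF0 : ∀ (y : ℝ) (s : Set T), MeasurableSet s →
      pr μ {ω | Y0 ω ≤ y ∧ η ω ∈ s} = ∫ t in s, F0 y t ∂ν)
    (hF1 : ∀ (y : ℝ) (s : Set T), MeasurableSet s →
      pr μ {ω | Y1 ω ≤ y ∧ η ω ∈ s} = ∫ t in s, F1 y t ∂ν) :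
    -- Condition S₁* holds …
    (∀ w wt : T → ℝ, Measurable w → Measurable wt →
      (∀ t, 0 ≤ w t) → (∀ t, 0 ≤ wt t) →
      (∫ t, w t ∂ν) = 1 → (∫ t, wt t ∂ν) = 1 →
      (∀ y : ℝ, (∫ t, w t * F1 y t ∂ν) ≤ ∫ t, wt t * F1 y t ∂ν) →
      (∀ y : ℝ, (∫ t, w t * F0 y t ∂ν) ≤ ∫ t, wt t * F0 y t ∂ν)) ∧
    -- … and hence Condition S₁ holds
    (∀ w wt : Fin L → ℝ, (∀ ℓ, 0 ≤ w ℓ) → (∀ ℓ, 0 ≤ wt ℓ) →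
      (∑ ℓ, w ℓ) = 1 → (∑ ℓ, wt ℓ) = 1 →
      (∀ y : ℝ, (∑ ℓ, w ℓ * cpr μ {ω | Y1 ω ≤ y} {ω | D ω = 1 ∧ Z ω = ℓ})
        ≤ ∑ ℓ, wt ℓ * cpr μ {ω | Y1 ω ≤ y} {ω | D ω = 1 ∧ Z ω = ℓ}) →
      (∀ y : ℝ, (∑ ℓ, w ℓ * cpr μ {ω | Y0 ω ≤ y} {ω | D ω = 1 ∧ Z ω = ℓ})
        ≤ ∑ ℓ, wt ℓ * cpr μ {ω | Y0 ω ≤ y} {ω | D ω = 1 ∧ Z ω = ℓ})) := by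
  subst hν
  have hmY0 : Measurable Y0 := funext hY0 ▸ (hq 0).1.measurable.comp hmU0
  have hmY1 : Measurable Y1 := funext hY1 ▸ (hq 1).1.measurable.comp hmU1
  have hjoint : ∀ {X X' : Ω → ℝ}, (∀ u s, MeasurableSet s → ∀ ℓ,
      pr μ {ω | X ω ≤ u ∧ η ω ∈ s ∧ Z ω = ℓ} = pr μ {ω | X' ω ≤ u ∧ η ω ∈ s ∧ Z ω = ℓ}) →
      ∀ u s, MeasurableSet s → μ (X ⁻¹' Iic u ∩ η ⁻¹' s) = μ (X' ⁻¹' Iic u ∩ η ⁻¹' s) :=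
    fun hX u s hs => measure_eq_of_forall_pr_inter_fiber_eq hmZ fun ℓ => by
      rw [inter_assoc, inter_assoc]
      exact hX u s hs ℓ
  have hnoise' : μ.map ξ0 = μ.map (ξ1 + V) := Measure.ext_of_Iic _ _ fun s => by
    rw [Measure.map_apply hmξ0 measurableSet_Iic,
      Measure.map_apply (hmξ1.add hmV) measurableSet_Iic]
    exact measure_eq_of_forall_pr_inter_fiber_eq hmZ (hnoise s)
  have hS1star : CondS1Star (μ.map η) F0 F1 :=
    condS1Star_of_tiltedLaw_Iic_le hmη hmY0 hmY1 hF0meas hF1meas hF0 hF1 fun _ _ hg hg' =>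
      tiltedLaw_Iic_le_of_model hmη hmU hmU0 hmU1 hmξ0 hmξ1 hmV (hq 0).1 (hq 0).2.monotone
        (hq 1).2 hY0 hY1 (hjoint hdist0) (hjoint hdist1) hξ0indep hξ1indep hVindep.symm hnoise'
        hg hg'
  exact ⟨hS1star, fun w wt hw0 hwt0 hw1 hwt1 hle => sum_mul_cpr_le_of_condS1Star hmη hmh hD
    hindepZ hposD1Z hF0meas hF1meas hF0 hF1 hS1star hw0 hwt0 hw1 hwt1 hle⟩

/-- Theorem 3: Model 1 with ξ₀ weakly more noisy than ξ₁ (together with the instrument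
exogeneity `Z ⊥ (Y₀, Y₁)`) implies Condition S₁*, and hence (under Assumption D)
Condition S₁.  Conditional-on-(η,Z) distributional equalities are encoded as equalities
of the corresponding joint probabilities; `F_d y t = P[Y_d ≤ y | η = t]` is a conditional
CDF of `Y_d` given `η` with respect to the type distribution `ν = law(η)`. -/
theorem model1_implies_condS1star_and_condS1
    {Ω : Type*} [MeasurableSpace Ω] (μ : Measure Ω) [IsProbabilityMeasure μ]
    {T : Type*} [MeasurableSpace T]
    (L : ℕ) [NeZero L]
    (U U0 U1 ξ0 ξ1 V : Ω → ℝ) (η : Ω → T) (Z : Ω → Fin L)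
    (q : ℕ → ℝ → ℝ) (h : Fin L → T → ℕ) (D : Ω → ℕ) (Y0 Y1 Y : Ω → ℝ)
    (hmU : Measurable U) (hmU0 : Measurable U0) (hmU1 : Measurable U1)
    (hmξ0 : Measurable ξ0) (hmξ1 : Measurable ξ1) (hmV : Measurable V)
    (hmη : Measurable η) (hmZ : Measurable Z) (hmh : ∀ ℓ, Measurable (h ℓ))
    -- Model 1(i): outcome equation with q(d,·) continuous and strictly increasing,
    -- and selection D = h(Z, η)
    (hq : ∀ d, Continuous (q d) ∧ StrictMono (q d))
    (hD : ∀ ω, D ω = h (Z ω) (η ω))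
    (hY0 : ∀ ω, Y0 ω = q 0 (U0 ω)) (hY1 : ∀ ω, Y1 ω = q 1 (U1 ω))
    (hYobs : ∀ ω, Y ω = if D ω = 1 then Y1 ω else Y0 ω)
    -- Model 1(ii): conditional on (η, Z), U_d =ᵈ U + ξ_d with ξ_d ⊥ (η, U), ξ_d has a density
    (hξ0indep : IndepFun ξ0 (fun ω => (η ω, U ω)) μ)
    (hξ1indep : IndepFun ξ1 (fun ω => (η ω, U ω)) μ)
    (hpdfξ0 : HasPDF ξ0 μ) (hpdfξ1 : HasPDF ξ1 μ)
    (hdist0 : ∀ (u : ℝ) (s : Set T), MeasurableSet s → ∀ ℓ : Fin L,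
      pr μ {ω | U0 ω ≤ u ∧ η ω ∈ s ∧ Z ω = ℓ}
        = pr μ {ω | U ω + ξ0 ω ≤ u ∧ η ω ∈ s ∧ Z ω = ℓ})
    (hdist1 : ∀ (u : ℝ) (s : Set T), MeasurableSet s → ∀ ℓ : Fin L,
      pr μ {ω | U1 ω ≤ u ∧ η ω ∈ s ∧ Z ω = ℓ}
        = pr μ {ω | U ω + ξ1 ω ≤ u ∧ η ω ∈ s ∧ Z ω = ℓ})
    -- Model 1(iii): conditional on Z, ξ₀ =ᵈ ξ₁ + V with V ⊥ ξ₁ and V has a density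
    (hVindep : IndepFun V ξ1 μ) (hpdfV : HasPDF V μ)
    (hnoise : ∀ (s : ℝ) (ℓ : Fin L),
      pr μ {ω | ξ0 ω ≤ s ∧ Z ω = ℓ} = pr μ {ω | ξ1 ω + V ω ≤ s ∧ Z ω = ℓ})
    -- instrument exogeneity (Assumption Z): Z ⊥ (Y₀, Y₁) (jointly with η for Assumption D)
    (hindepZ : IndepFun Z (fun ω => (Y0 ω, Y1 ω, η ω)) μ)
    (hZpos : ∀ ℓ : Fin L, 0 < pr μ {ω | Z ω = ℓ})
    (hposD1Z : ∀ ℓ : Fin L, 0 < pr μ {ω | D ω = 1 ∧ Z ω = ℓ})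
    -- the type distribution and the conditional CDFs of Y₀, Y₁ given η
    (ν : Measure T) (hν : ν = μ.map η)
    (F0 F1 : ℝ → T → ℝ)
    (hF0meas : ∀ y, Measurable (F0 y)) (hF1meas : ∀ y, Measurable (F1 y))
    (hF0 : ∀ (y : ℝ) (s : Set T), MeasurableSet s →
      pr μ {ω | Y0 ω ≤ y ∧ η ω ∈ s} = ∫ t in s, F0 y t ∂ν)
    (hF1 : ∀ (y : ℝ) (s : Set T), MeasurableSet s →
      pr μ {ω | Y1 ω ≤ y ∧ η ω ∈ s} = ∫ t in s, F1 y t ∂ν) :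
    -- Condition S₁* holds …
    (∀ w wt : T → ℝ, Measurable w → Measurable wt →
      (∀ t, 0 ≤ w t) → (∀ t, 0 ≤ wt t) →
      (∫ t, w t ∂ν) = 1 → (∫ t, wt t ∂ν) = 1 →
      (∀ y : ℝ, (∫ t, w t * F1 y t ∂ν) ≤ ∫ t, wt t * F1 y t ∂ν) →
      (∀ y : ℝ, (∫ t, w t * F0 y t ∂ν) ≤ ∫ t, wt t * F0 y t ∂ν)) ∧
    -- … and hence Condition S₁ holds
    (∀ w wt : Fin L → ℝ, (∀ ℓ, 0 ≤ w ℓ) → (∀ ℓ, 0 ≤ wt ℓ) →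
      (∑ ℓ, w ℓ) = 1 → (∑ ℓ, wt ℓ) = 1 →
      (∀ y : ℝ, (∑ ℓ, w ℓ * cpr μ {ω | Y1 ω ≤ y} {ω | D ω = 1 ∧ Z ω = ℓ})
        ≤ ∑ ℓ, wt ℓ * cpr μ {ω | Y1 ω ≤ y} {ω | D ω = 1 ∧ Z ω = ℓ}) →
      (∀ y : ℝ, (∑ ℓ, w ℓ * cpr μ {ω | Y0 ω ≤ y} {ω | D ω = 1 ∧ Z ω = ℓ})
        ≤ ∑ ℓ, wt ℓ * cpr μ {ω | Y0 ω ≤ y} {ω | D ω = 1 ∧ Z ω = ℓ})) :=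
  model1_implies_condS1star_and_condS1_general μ L U U0 U1 ξ0 ξ1 V η Z q h D Y0 Y1 hmU hmU0 hmU1
    hmξ0 hmξ1 hmV hmη hmZ hmh hq hD hY0 hY1 hξ0indep hξ1indep hdist0 hdist1 hVindep hnoise hindepZ
    hposD1Z ν hν F0 F1 hF0meas hF1meas hF0 hF1
end

section
/- Suppose Z is independent of Y0 and of Y1, Condition S1 holds, and 0 < p(z_ℓ) < 1 for every ℓ. Let γ = (γ_1,...,γ_L) ∈ Γ satisfy the equality P[Y ≤ y | D=1] = Σ_{ℓ=1}^L γ_ℓ P[Y ≤ y, D=1 | Z=z_ℓ] for every y ∈ ℝ. Then the counterfactual distribution is point identified: P[Y0 ≤ y | D=1] = −Σ_{ℓ=1}^L γ_ℓ P[Y ≤ y, D=0 | Z=z_ℓ] for every y ∈ ℝ. -/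
open MeasureTheory ProbabilityTheory Filter Set

lemma pr_nonneg' {Ω : Type*} [MeasurableSpace Ω] (μ : Measure Ω) (s : Set Ω) : 0 ≤ pr μ s :=
  ENNReal.toReal_nonneg

lemma pr_fiber_sum {Ω : Type*} [MeasurableSpace Ω] (μ : Measure Ω) [IsProbabilityMeasure μ]
    {L : ℕ} (Z : Ω → Fin L) (hmZ : Measurable Z) (A : Set Ω) (hA : MeasurableSet A) :
    pr μ A = ∑ ℓ, pr μ (A ∩ {ω | Z ω = ℓ}) := by
  have hU : A = ⋃ ℓ, A ∩ {ω | Z ω = ℓ} := by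
    ext ω; simp
  have hd : Pairwise (Function.onFun Disjoint fun ℓ => A ∩ {ω | Z ω = ℓ}) := by
    intro i j hij
    simp only [Function.onFun, Set.disjoint_left]
    rintro ω ⟨_, hi⟩ ⟨_, hj⟩
    exact hij ((Set.mem_setOf_eq ▸ hi).symm.trans hj)
  have hm : ∀ ℓ, MeasurableSet (A ∩ {ω | Z ω = ℓ}) :=
    fun ℓ => hA.inter (hmZ (measurableSet_singleton ℓ))
  have hμ : μ A = ∑ ℓ, μ (A ∩ {ω | Z ω = ℓ}) := by
    conv_lhs => rw [hU]
    rw [measure_iUnion hd hm, tsum_fintype]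
  simp only [pr, hμ, ENNReal.toReal_sum (fun ℓ _ => measure_ne_top μ _)]

lemma pr_split {Ω : Type*} [MeasurableSpace Ω] (μ : Measure Ω) [IsProbabilityMeasure μ]
    (s t : Set Ω) (ht : MeasurableSet t) :
    pr μ s = pr μ (s ∩ t) + pr μ (s ∩ tᶜ) := by
  unfold pr
  rw [← ENNReal.toReal_add (measure_ne_top _ _) (measure_ne_top _ _), ← Set.diff_eq,
    measure_inter_add_diff s ht]

/-- Point identification of the counterfactual distribution `P[Y₀ ≤ y | D = 1]`
when the rank condition holds with equality. -/
theorem point_identification_of_counterfactual_distribution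
    {Ω : Type*} [MeasurableSpace Ω] (μ : Measure Ω) [IsProbabilityMeasure μ]
    (L : ℕ) [NeZero L]
    (Y0 Y1 Y : Ω → ℝ) (D : Ω → ℕ) (Z : Ω → Fin L)
    (hmY0 : Measurable Y0) (hmY1 : Measurable Y1) (hmD : Measurable D) (hmZ : Measurable Z)
    (hD01 : ∀ ω, D ω = 0 ∨ D ω = 1)
    (hYobs : ∀ ω, Y ω = if D ω = 1 then Y1 ω else Y0 ω)
    (hZpos : ∀ ℓ : Fin L, 0 < pr μ {ω | Z ω = ℓ})
    (hposD1 : 0 < pr μ {ω | D ω = 1})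
    (hposD1Z : ∀ ℓ : Fin L, 0 < pr μ {ω | D ω = 1 ∧ Z ω = ℓ})
    (hindep0 : IndepFun Z Y0 μ) (hindep1 : IndepFun Z Y1 μ)
    (p : Fin L → ℝ) (hp : ∀ ℓ, p ℓ = cpr μ {ω | D ω = 1} {ω | Z ω = ℓ})
    (hp01 : ∀ ℓ, 0 < p ℓ ∧ p ℓ < 1)
    -- Condition S₁
    (condS1 : ∀ w wt : Fin L → ℝ, (∀ ℓ, 0 ≤ w ℓ) → (∀ ℓ, 0 ≤ wt ℓ) →
      (∑ ℓ, w ℓ) = 1 → (∑ ℓ, wt ℓ) = 1 →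
      (∀ y : ℝ, (∑ ℓ, w ℓ * cpr μ {ω | Y1 ω ≤ y} {ω | D ω = 1 ∧ Z ω = ℓ})
        ≤ ∑ ℓ, wt ℓ * cpr μ {ω | Y1 ω ≤ y} {ω | D ω = 1 ∧ Z ω = ℓ}) →
      (∀ y : ℝ, (∑ ℓ, w ℓ * cpr μ {ω | Y0 ω ≤ y} {ω | D ω = 1 ∧ Z ω = ℓ})
        ≤ ∑ ℓ, wt ℓ * cpr μ {ω | Y0 ω ≤ y} {ω | D ω = 1 ∧ Z ω = ℓ}))
    -- γ ∈ Γ and the rank condition holding with equality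
    (γ : Fin L → ℝ)
    (hγ0 : (∑ ℓ, γ ℓ) = 0) (hγ1 : (∑ ℓ, γ ℓ * p ℓ) = 1)
    (hEq : ∀ y : ℝ, cpr μ {ω | Y ω ≤ y} {ω | D ω = 1}
      = ∑ ℓ, γ ℓ * cpr μ {ω | Y ω ≤ y ∧ D ω = 1} {ω | Z ω = ℓ}) :
    ∀ y : ℝ, cpr μ {ω | Y0 ω ≤ y} {ω | D ω = 1}
      = -∑ ℓ, γ ℓ * cpr μ {ω | Y ω ≤ y ∧ D ω = 0} {ω | Z ω = ℓ} := by
  -- basic nonvanishing facts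
  have hq0 : ∀ ℓ : Fin L, pr μ {ω | Z ω = ℓ} ≠ 0 := fun ℓ => (hZpos ℓ).ne'
  have hr0 : ∀ ℓ : Fin L, pr μ {ω | D ω = 1 ∧ Z ω = ℓ} ≠ 0 := fun ℓ => (hposD1Z ℓ).ne'
  have hP10 : pr μ {ω | D ω = 1} ≠ 0 := hposD1.ne'
  have hpne : ∀ ℓ, p ℓ ≠ 0 := fun ℓ => (hp01 ℓ).1.ne'
  -- measurability
  have hmD1 : MeasurableSet {ω | D ω = 1} := hmD (measurableSet_singleton 1)
  have hmZl : ∀ ℓ : Fin L, MeasurableSet {ω | Z ω = ℓ} :=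
    fun ℓ => hmZ (measurableSet_singleton ℓ)
  have hmY1s : ∀ y : ℝ, MeasurableSet {ω | Y1 ω ≤ y} := fun y => hmY1 measurableSet_Iic
  have hmY0s : ∀ y : ℝ, MeasurableSet {ω | Y0 ω ≤ y} := fun y => hmY0 measurableSet_Iic
  -- set identities
  have hDZ : ∀ ℓ : Fin L, {ω | D ω = 1 ∧ Z ω = ℓ} = {ω | D ω = 1} ∩ {ω | Z ω = ℓ} :=
    fun ℓ => rfl
  have hsetY1 : ∀ y : ℝ, {ω | Y ω ≤ y} ∩ {ω | D ω = 1} = {ω | Y1 ω ≤ y} ∩ {ω | D ω = 1} := by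
    intro y; ext ω
    simp only [Set.mem_inter_iff, Set.mem_setOf_eq, hYobs ω]
    constructor
    · rintro ⟨h1, h2⟩; rw [if_pos h2] at h1; exact ⟨h1, h2⟩
    · rintro ⟨h1, h2⟩; rw [if_pos h2]; exact ⟨h1, h2⟩
  have hsetYD1 : ∀ y : ℝ, {ω | Y ω ≤ y ∧ D ω = 1} = {ω | Y1 ω ≤ y} ∩ {ω | D ω = 1} :=
    fun y => hsetY1 y
  have hsetYD0 : ∀ y : ℝ, {ω | Y ω ≤ y ∧ D ω = 0}
      = {ω | Y0 ω ≤ y} ∩ {ω | D ω = 1}ᶜ := by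
    intro y; ext ω
    simp only [Set.mem_setOf_eq, Set.mem_inter_iff, Set.mem_compl_iff, hYobs ω]
    constructor
    · rintro ⟨h1, h2⟩
      have h2' : D ω ≠ 1 := by omega
      rw [if_neg h2'] at h1; exact ⟨h1, h2'⟩
    · rintro ⟨h1, h2⟩
      have h0 : D ω = 0 := (hD01 ω).resolve_right h2
      rw [if_neg h2]; exact ⟨h1, h0⟩
  -- r ℓ = p ℓ * q ℓ
  have hrq : ∀ ℓ : Fin L, pr μ {ω | D ω = 1 ∧ Z ω = ℓ} = p ℓ * pr μ {ω | Z ω = ℓ} := by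
    intro ℓ
    have h := hp ℓ
    rw [cpr] at h
    rw [hDZ ℓ]
    field_simp [hq0 ℓ] at h
    linarith
  -- sum of r over fibers
  have hsum_r : (∑ ℓ, pr μ {ω | D ω = 1 ∧ Z ω = ℓ}) = pr μ {ω | D ω = 1} := by
    rw [pr_fiber_sum μ Z hmZ _ hmD1]
    exact Finset.sum_congr rfl fun ℓ _ => by rw [hDZ ℓ]
  -- the weights w
  set w : Fin L → ℝ := fun ℓ => pr μ {ω | D ω = 1 ∧ Z ω = ℓ} / pr μ {ω | D ω = 1} with hw
  have hw_nonneg : ∀ ℓ, 0 ≤ w ℓ := fun ℓ => div_nonneg (pr_nonneg' μ _) (pr_nonneg' μ _)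
  have hw_sum : (∑ ℓ, w ℓ) = 1 := by
    rw [hw, ← Finset.sum_div, hsum_r, div_self hP10]
  -- expansion (C)
  have expandC : ∀ (y : ℝ) (ℓ : Fin L), cpr μ {ω | Y ω ≤ y ∧ D ω = 1} {ω | Z ω = ℓ}
      = p ℓ * cpr μ {ω | Y1 ω ≤ y} {ω | D ω = 1 ∧ Z ω = ℓ} := by
    intro y ℓ
    rw [cpr, cpr, hsetYD1 y, Set.inter_assoc, ← hDZ ℓ, hrq ℓ]
    rw [← mul_div_assoc, mul_div_mul_left _ _ (hpne ℓ)]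
  -- expansion (B): conditional cdf of Y1 given D=1 as a w-mixture
  have expandB : ∀ y : ℝ, cpr μ {ω | Y ω ≤ y} {ω | D ω = 1}
      = ∑ ℓ, w ℓ * cpr μ {ω | Y1 ω ≤ y} {ω | D ω = 1 ∧ Z ω = ℓ} := by
    intro y
    rw [cpr, hsetY1 y, pr_fiber_sum μ Z hmZ _ ((hmY1s y).inter hmD1), Finset.sum_div]
    refine Finset.sum_congr rfl fun ℓ _ => ?_
    simp only [hw, cpr]
    rw [Set.inter_assoc, ← hDZ ℓ]
    field_simp [hr0 ℓ, hP10]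
  -- expansion (E): conditional cdf of Y0 given D=1 as a w-mixture
  have expandE : ∀ y : ℝ, cpr μ {ω | Y0 ω ≤ y} {ω | D ω = 1}
      = ∑ ℓ, w ℓ * cpr μ {ω | Y0 ω ≤ y} {ω | D ω = 1 ∧ Z ω = ℓ} := by
    intro y
    rw [cpr, pr_fiber_sum μ Z hmZ _ ((hmY0s y).inter hmD1), Finset.sum_div]
    refine Finset.sum_congr rfl fun ℓ _ => ?_
    simp only [hw, cpr]
    rw [Set.inter_assoc, ← hDZ ℓ]
    field_simp [hr0 ℓ, hP10]
  -- independence of Y0 and Z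
  have hind : ∀ (y : ℝ) (ℓ : Fin L), pr μ ({ω | Y0 ω ≤ y} ∩ {ω | Z ω = ℓ})
      = pr μ {ω | Y0 ω ≤ y} * pr μ {ω | Z ω = ℓ} := by
    intro y ℓ
    have h := hindep0.measure_inter_preimage_eq_mul (s := {ℓ}) (t := Set.Iic y)
      (measurableSet_singleton ℓ) measurableSet_Iic
    have hZs : Z ⁻¹' {ℓ} = {ω | Z ω = ℓ} := rfl
    have hYs : Y0 ⁻¹' Set.Iic y = {ω | Y0 ω ≤ y} := rfl
    rw [hZs, hYs] at h
    rw [Set.inter_comm] at h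
    unfold pr
    rw [h, ENNReal.toReal_mul, mul_comm]
  -- expansion (D)
  have expandD : ∀ (y : ℝ) (ℓ : Fin L), cpr μ {ω | Y ω ≤ y ∧ D ω = 0} {ω | Z ω = ℓ}
      = pr μ {ω | Y0 ω ≤ y} - p ℓ * cpr μ {ω | Y0 ω ≤ y} {ω | D ω = 1 ∧ Z ω = ℓ} := by
    intro y ℓ
    have hsplit := pr_split μ ({ω | Y0 ω ≤ y} ∩ {ω | Z ω = ℓ}) {ω | D ω = 1} hmD1
    have hset1 : {ω | Y0 ω ≤ y} ∩ {ω | Z ω = ℓ} ∩ {ω | D ω = 1}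
        = {ω | Y0 ω ≤ y} ∩ {ω | D ω = 1 ∧ Z ω = ℓ} := by
      rw [hDZ ℓ]; ext ω; simp only [Set.mem_inter_iff, Set.mem_setOf_eq]; tauto
    have hset0 : {ω | Y0 ω ≤ y} ∩ {ω | Z ω = ℓ} ∩ {ω | D ω = 1}ᶜ
        = {ω | Y ω ≤ y ∧ D ω = 0} ∩ {ω | Z ω = ℓ} := by
      rw [hsetYD0 y]; ext ω
      simp only [Set.mem_inter_iff, Set.mem_setOf_eq, Set.mem_compl_iff]; tauto
    rw [hset1, hset0, hind y ℓ] at hsplit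
    rw [cpr, cpr]
    have hr := hrq ℓ
    have : pr μ ({ω | Y ω ≤ y ∧ D ω = 0} ∩ {ω | Z ω = ℓ})
        = pr μ {ω | Y0 ω ≤ y} * pr μ {ω | Z ω = ℓ}
          - pr μ ({ω | Y0 ω ≤ y} ∩ {ω | D ω = 1 ∧ Z ω = ℓ}) := by linarith
    rw [this, hr]
    field_simp [hq0 ℓ, hpne ℓ]
  -- rank condition rewritten
  have key1 : ∀ y : ℝ, (∑ ℓ, w ℓ * cpr μ {ω | Y1 ω ≤ y} {ω | D ω = 1 ∧ Z ω = ℓ})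
      = ∑ ℓ, (γ ℓ * p ℓ) * cpr μ {ω | Y1 ω ≤ y} {ω | D ω = 1 ∧ Z ω = ℓ} := by
    intro y
    have h := hEq y
    rw [expandB y] at h
    rw [h]
    refine Finset.sum_congr rfl fun ℓ _ => ?_
    rw [expandC y ℓ, mul_assoc]
  -- positive/negative parts of γ * p
  set a : Fin L → ℝ := fun ℓ => max (γ ℓ * p ℓ) 0 with ha
  set b : Fin L → ℝ := fun ℓ => max (-(γ ℓ * p ℓ)) 0 with hb
  have hab : ∀ ℓ, a ℓ - b ℓ = γ ℓ * p ℓ := fun ℓ => max_zero_sub_max_neg_zero_eq_self _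
  have ha_nn : ∀ ℓ, 0 ≤ a ℓ := fun ℓ => le_max_right _ _
  have hb_nn : ∀ ℓ, 0 ≤ b ℓ := fun ℓ => le_max_right _ _
  set s : ℝ := ∑ ℓ, b ℓ with hs
  have hs_nn : 0 ≤ s := Finset.sum_nonneg fun ℓ _ => hb_nn ℓ
  have h1s : (0:ℝ) < 1 + s := by linarith
  have h1s0 : (1:ℝ) + s ≠ 0 := h1s.ne'
  have hsum_a : (∑ ℓ, a ℓ) = 1 + s := by
    have : (∑ ℓ, (a ℓ - b ℓ)) = 1 := by
      rw [Finset.sum_congr rfl fun ℓ _ => hab ℓ]; exact hγ1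
    rw [Finset.sum_sub_distrib] at this
    linarith
  set W : Fin L → ℝ := fun ℓ => (w ℓ + b ℓ) / (1 + s) with hW
  set Wt : Fin L → ℝ := fun ℓ => a ℓ / (1 + s) with hWt
  have hW_nn : ∀ ℓ, 0 ≤ W ℓ := fun ℓ =>
    div_nonneg (by linarith [hw_nonneg ℓ, hb_nn ℓ]) h1s.le
  have hWt_nn : ∀ ℓ, 0 ≤ Wt ℓ := fun ℓ => div_nonneg (ha_nn ℓ) h1s.le
  have hW_sum : (∑ ℓ, W ℓ) = 1 := by
    rw [hW]
    rw [← Finset.sum_div, Finset.sum_add_distrib, hw_sum, ← hs, div_self h1s0]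
  have hWt_sum : (∑ ℓ, Wt ℓ) = 1 := by
    rw [hWt, ← Finset.sum_div, hsum_a, div_self h1s0]
  -- difference identity
  have hdiff : ∀ G : Fin L → ℝ, (∑ ℓ, W ℓ * G ℓ) - (∑ ℓ, Wt ℓ * G ℓ)
      = ((∑ ℓ, w ℓ * G ℓ) - ∑ ℓ, (γ ℓ * p ℓ) * G ℓ) / (1 + s) := by
    intro G
    rw [← Finset.sum_sub_distrib, ← Finset.sum_sub_distrib, Finset.sum_div]
    refine Finset.sum_congr rfl fun ℓ _ => ?_
    rw [← hab ℓ, hW, hWt]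
    field_simp
    ring
  -- equality of Y1 mixtures for W and Wt
  have hWeq1 : ∀ y : ℝ, (∑ ℓ, W ℓ * cpr μ {ω | Y1 ω ≤ y} {ω | D ω = 1 ∧ Z ω = ℓ})
      = ∑ ℓ, Wt ℓ * cpr μ {ω | Y1 ω ≤ y} {ω | D ω = 1 ∧ Z ω = ℓ} := by
    intro y
    have := hdiff (fun ℓ => cpr μ {ω | Y1 ω ≤ y} {ω | D ω = 1 ∧ Z ω = ℓ})
    rw [key1 y, sub_self, zero_div] at this
    linarith
  -- apply S1 in both directions
  have hS1a := condS1 W Wt hW_nn hWt_nn hW_sum hWt_sum (fun y => (hWeq1 y).le)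
  have hS1b := condS1 Wt W hWt_nn hW_nn hWt_sum hW_sum (fun y => (hWeq1 y).ge)
  have hWeq0 : ∀ y : ℝ, (∑ ℓ, w ℓ * cpr μ {ω | Y0 ω ≤ y} {ω | D ω = 1 ∧ Z ω = ℓ})
      = ∑ ℓ, (γ ℓ * p ℓ) * cpr μ {ω | Y0 ω ≤ y} {ω | D ω = 1 ∧ Z ω = ℓ} := by
    intro y
    have heq : (∑ ℓ, W ℓ * cpr μ {ω | Y0 ω ≤ y} {ω | D ω = 1 ∧ Z ω = ℓ})
        = ∑ ℓ, Wt ℓ * cpr μ {ω | Y0 ω ≤ y} {ω | D ω = 1 ∧ Z ω = ℓ} :=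
      le_antisymm (hS1a y) (hS1b y)
    have hd := hdiff (fun ℓ => cpr μ {ω | Y0 ω ≤ y} {ω | D ω = 1 ∧ Z ω = ℓ})
    rw [heq, sub_self] at hd
    have := (div_eq_zero_iff.mp hd.symm).resolve_right h1s0
    linarith
  -- conclude
  intro y
  have hR : (∑ ℓ, γ ℓ * cpr μ {ω | Y ω ≤ y ∧ D ω = 0} {ω | Z ω = ℓ})
      = (∑ ℓ, γ ℓ) * pr μ {ω | Y0 ω ≤ y}
        - ∑ ℓ, (γ ℓ * p ℓ) * cpr μ {ω | Y0 ω ≤ y} {ω | D ω = 1 ∧ Z ω = ℓ} := by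
    have h1 : ∀ ℓ : Fin L, γ ℓ * cpr μ {ω | Y ω ≤ y ∧ D ω = 0} {ω | Z ω = ℓ}
        = γ ℓ * pr μ {ω | Y0 ω ≤ y}
          - (γ ℓ * p ℓ) * cpr μ {ω | Y0 ω ≤ y} {ω | D ω = 1 ∧ Z ω = ℓ} := by
      intro ℓ; rw [expandD y ℓ]; ring
    rw [Finset.sum_congr rfl fun ℓ _ => h1 ℓ, Finset.sum_sub_distrib, ← Finset.sum_mul]
  rw [expandE y, hWeq0 y, hR, hγ0]
  ring
end

section
/- Suppose Model 3 holds: Y = q(D, U_D) with q(d, ·) continuous and strictly increasing, D = h(Z, η), and, conditional on η, U0 has the same distribution as max{φ(U1), V}, where V is independent of (U1, η) and φ is strictly increasing. Then rank linearity holds with ψ(y) = q(1, φ^{-1}(q^{-1}(0, y))) and λ(y) = F_V(q^{-1}(0, y)); that is, F_{Y0|η}(y|t) = λ(y) F_{Y1|η}(ψ(y)|t) for all y and all t ∈ 𝒯. -/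
open MeasureTheory ProbabilityTheory Filter Set

/-- Lemma 3(ii): Model 3 implies rank linearity with `ψ(y) = q(1, φ⁻¹(q⁻¹(0, y)))` and
`λ(y) = F_V(q⁻¹(0, y))`.  In Model 3, conditional on η, U₀ =ᵈ max{φ(U₁), V} with
V ⊥ (U₁, η) and φ strictly increasing.  The conclusion
`F_{Y₀|η}(y|t) = λ(y) · F_{Y₁|η}(ψ(y)|t)` is stated in its integrated (joint) form
`P[Y₀ ≤ y, η ∈ s] = λ(y) · P[Y₁ ≤ ψ(y), η ∈ s]` for all measurable sets `s` of types. -/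
theorem model3_implies_rank_linearity
    {Ω : Type*} [MeasurableSpace Ω] (μ : Measure Ω) [IsProbabilityMeasure μ]
    {T : Type*} [MeasurableSpace T]
    (L : ℕ) [NeZero L]
    (U0 U1 V : Ω → ℝ) (η : Ω → T) (Z : Ω → Fin L)
    (q qinv : ℕ → ℝ → ℝ) (φ φinv : ℝ → ℝ) (h : Fin L → T → ℕ) (D : Ω → ℕ)
    (Y0 Y1 Y : Ω → ℝ)
    (hmU0 : Measurable U0) (hmU1 : Measurable U1) (hmV : Measurable V)
    (hmη : Measurable η) (hmZ : Measurable Z)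
    -- Model 3(i): outcome equation with q(d,·) continuous strictly increasing and
    -- two-sided inverse qinv(d,·); selection D = h(Z,η)
    (hq : ∀ d, Continuous (q d) ∧ StrictMono (q d))
    (hqinv : ∀ d, Function.LeftInverse (qinv d) (q d) ∧ Function.RightInverse (qinv d) (q d))
    (hD : ∀ ω, D ω = h (Z ω) (η ω))
    (hY0 : ∀ ω, Y0 ω = q 0 (U0 ω)) (hY1 : ∀ ω, Y1 ω = q 1 (U1 ω))
    (hYobs : ∀ ω, Y ω = if D ω = 1 then Y1 ω else Y0 ω)
    -- Model 3(ii): conditional on η, U₀ =ᵈ max{φ(U₁), V}, V ⊥ (U₁, η), φ strictly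
    -- increasing with two-sided inverse φinv
    (hφ : StrictMono φ)
    (hφinv : Function.LeftInverse φinv φ ∧ Function.RightInverse φinv φ)
    (hVindep : IndepFun V (fun ω => (U1 ω, η ω)) μ)
    (hdist : ∀ (u : ℝ) (s : Set T), MeasurableSet s →
      pr μ {ω | U0 ω ≤ u ∧ η ω ∈ s}
        = pr μ {ω | max (φ (U1 ω)) (V ω) ≤ u ∧ η ω ∈ s}) :
    -- rank linearity with ψ(y) = q(1, φ⁻¹(q⁻¹(0,y))) and λ(y) = F_V(q⁻¹(0,y))
    StrictMono (fun y => q 1 (φinv (qinv 0 y))) ∧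
      ∀ (y : ℝ) (s : Set T), MeasurableSet s →
        pr μ {ω | Y0 ω ≤ y ∧ η ω ∈ s}
          = pr μ {ω | V ω ≤ qinv 0 y}
            * pr μ {ω | Y1 ω ≤ q 1 (φinv (qinv 0 y)) ∧ η ω ∈ s} := by

  obtain ⟨hl0, hr0⟩ := hqinv 0
  obtain ⟨hlφ, hrφ⟩ := hφinv
  have hq0 := (hq 0).2
  have hq1 := (hq 1).2
  constructor
  · intro a b hab
    have h1 : qinv 0 a < qinv 0 b := by
      rw [← hq0.lt_iff_lt, hr0, hr0]; exact hab
    have h2 : φinv (qinv 0 a) < φinv (qinv 0 b) := by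
      rw [← hφ.lt_iff_lt, hrφ, hrφ]; exact h1
    exact hq1 h2
  · intro y s hs
    set u := qinv 0 y with hu
    have e1 : {ω | Y0 ω ≤ y ∧ η ω ∈ s} = {ω | U0 ω ≤ u ∧ η ω ∈ s} := by
      ext ω
      simp only [mem_setOf_eq, hY0]
      constructor
      · rintro ⟨h1, h2⟩
        refine ⟨?_, h2⟩
        rw [← hq0.le_iff_le, hr0]; exact h1
      · rintro ⟨h1, h2⟩
        refine ⟨?_, h2⟩
        calc q 0 (U0 ω) ≤ q 0 u := hq0.monotone h1
          _ = y := hr0 y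
    rw [e1, hdist u s hs]
    have e2 : {ω | max (φ (U1 ω)) (V ω) ≤ u ∧ η ω ∈ s}
        = V ⁻¹' (Iic u) ∩ (fun ω => (U1 ω, η ω)) ⁻¹' (Iic (φinv u) ×ˢ s) := by
      ext ω
      simp only [mem_setOf_eq, max_le_iff, mem_inter_iff, mem_preimage, mem_Iic, mem_prod]
      constructor
      · rintro ⟨⟨h1, h2⟩, h3⟩
        refine ⟨h2, ?_, h3⟩
        rw [← hφ.le_iff_le, hrφ]; exact h1
      · rintro ⟨h2, h1, h3⟩
        refine ⟨⟨?_, h2⟩, h3⟩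
        calc φ (U1 ω) ≤ φ (φinv u) := hφ.monotone h1
          _ = u := hrφ u
    have e3 : {ω | Y1 ω ≤ q 1 (φinv u) ∧ η ω ∈ s}
        = (fun ω => (U1 ω, η ω)) ⁻¹' (Iic (φinv u) ×ˢ s) := by
      ext ω
      simp only [mem_setOf_eq, mem_preimage, mem_prod, mem_Iic, hY1, hq1.le_iff_le]
    rw [e3, e2]
    have key := hVindep.measure_inter_preimage_eq_mul (Iic u) (Iic (φinv u) ×ˢ s)
      measurableSet_Iic (measurableSet_Iic.prod hs)
    have hVset : {ω | V ω ≤ u} = V ⁻¹' Iic u := rfl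
    unfold pr
    rw [key, hVset, ENNReal.toReal_mul]
end

section
/- (Strong duality.) Suppose 𝒴 is compact, the maps y ↦ p(y|1) and y ↦ p(y,1) are continuous on 𝒴, and there exists a Slater point γ* with Σ_ℓ γ*_ℓ = 0, Σ_ℓ γ*_ℓ p(z_ℓ) = 1, and p(y,1)'γ* > p(y|1) for all y ∈ 𝒴. If the primal optimal value UB(ȳ) is finite, then the dual optimal value equals the primal optimal value: ŨB(ȳ) = UB(ȳ). -/
/-!
Write `a y = p(y,1)`, `c y = p(y|1)`, `b = p(ȳ,0)` and work in `ℝ^L × ℝ` with the closed convex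
cone `T = V + cone S`, where `V` is spanned by the directions `(1, 0)` and `(p, -1)` of the
equality constraints and `S` consists of the points `(a y, -c y)`, `y ∈ 𝒴`, and the slack direction
`(0, 1)`. A decomposition of `(-b, -t)` along `T` is a dual feasible point (a finitely supported
`Λ`) of value at least `t`. If `(-b, -t) ∉ T`, Farkas' lemma gives a functional `(γ, β)` that is
nonnegative on `T` and negative at `(-b, -t)`: for `β > 0`, `γ / β` is primal feasible with value
below `t`, and for `β = 0`, `γ` is a direction along which the primal objective is unbounded
below. So dual values come arbitrarily close to `UB(ȳ)`, and weak duality bounds them by it.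

Compactness and the Slater point `γ*` are what make `T` closed: the functional `(γ*, 1)`
vanishes on `V` and is bounded away from `0` on the compact convex hull of `S`, so below any level
of that functional `T` agrees with `V + [0, R] • conv S`.
-/

open MeasureTheory Set Pointwise

section ConvexGeometry

variable {E : Type*}

theorem IsCompact.convexHull [NormedAddCommGroup E] [NormedSpace ℝ E] [FiniteDimensional ℝ E]
    {s : Set E} (hs : IsCompact s) : IsCompact (_root_.convexHull ℝ s) := by
  -- Carathéodory: `dim E + 1` points of `s` suffice for each point of the hull.
  have hcover : _root_.convexHull ℝ s = ⋃ k ∈ Finset.range (Module.finrank ℝ E + 2),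
      (fun q : (Fin k → ℝ) × (Fin k → E) => ∑ i, q.1 i • q.2 i) ''
        (stdSimplex ℝ (Fin k) ×ˢ univ.pi fun _ => s) := by
    refine Subset.antisymm (fun x hx => ?_) (iUnion₂_subset fun k _ => ?_)
    · obtain ⟨ι, _, z, w, hzs, hz, hw0, hw1, rfl⟩ := eq_pos_convex_span_of_mem_convexHull hx
      have hcard : Fintype.card ι < Module.finrank ℝ E + 2 :=
        Nat.lt_succ_of_le (hz.card_le_finrank_succ.trans (by
          have := Submodule.finrank_le (vectorSpan ℝ (range z)); omega))
      let e := (Fintype.equivFin ι).symm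
      refine mem_iUnion₂.2 ⟨_, Finset.mem_range.2 hcard, (w ∘ e, z ∘ e),
        ⟨⟨fun i => (hw0 _).le, (e.sum_comp w).trans hw1⟩, fun i _ => hzs ⟨_, rfl⟩⟩,
        e.sum_comp fun i => w i • z i⟩
    · rintro _ ⟨⟨w, z⟩, ⟨hw, hz⟩, rfl⟩
      exact (convex_convexHull ℝ s).sum_mem (fun i _ => hw.1 i) hw.2
        fun i _ => subset_convexHull ℝ s (hz i trivial)
  rw [hcover]
  exact (Finset.range _).isCompact_biUnion fun k _ =>
    ((isCompact_stdSimplex ℝ (Fin k)).prod (isCompact_univ_pi fun _ => hs)).image (by fun_prop)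

theorem PointedCone.coe_hull_eq_Ici_smul_convexHull {𝕜 : Type*} [Field 𝕜] [LinearOrder 𝕜]
    [IsStrictOrderedRing 𝕜] [AddCommGroup E] [Module 𝕜 E] {S : Set E} (hS : S.Nonempty) :
    (hull 𝕜 S : Set E) = Ici (0 : 𝕜) • convexHull 𝕜 S := by
  refine Subset.antisymm (fun x hx => ?_) ?_
  · obtain ⟨l, hlS, hl0, rfl⟩ := mem_hull_set.1 hx
    by_cases hr : ∑ y ∈ l.support, l y = 0
    · rw [Finset.sum_eq_zero_iff_of_nonneg fun y _ => hl0 y] at hr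
      obtain ⟨s₀, hs₀⟩ := hS
      refine ⟨0, le_rfl, s₀, subset_convexHull 𝕜 S hs₀, ?_⟩
      change (0 : 𝕜) • s₀ = _
      rw [zero_smul, Finsupp.sum, Finset.sum_eq_zero fun y hy => by rw [hr y hy, zero_smul]]
    · refine ⟨∑ y ∈ l.support, l y, Finset.sum_nonneg fun y _ => hl0 y, l.support.centerMass l id,
        l.support.centerMass_mem_convexHull (fun y _ => hl0 y)
          ((Finset.sum_nonneg fun y _ => hl0 y).lt_of_ne' hr) fun y hy => hlS hy, ?_⟩
      change _ • _ = _
      rw [Finset.centerMass, smul_inv_smul₀ hr]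
      rfl
  · rintro _ ⟨r, hr, w, hw, rfl⟩
    exact (hull 𝕜 S).smul_mem hr (convexHull_min subset_hull (hull 𝕜 S).convex hw)

theorem PointedCone.isClosed_sup_hull [NormedAddCommGroup E] [NormedSpace ℝ E]
    [FiniteDimensional ℝ E] (V : Submodule ℝ E) {S : Set E} (hS : IsCompact S)
    (hSne : S.Nonempty) {ψ : StrongDual ℝ E} (hψV : ∀ v ∈ V, ψ v = 0)
    (hψS : ∀ x ∈ S, 0 < ψ x) : IsClosed ((V ⊔ hull ℝ S : PointedCone ℝ E) : Set E) := by
  set K := convexHull ℝ S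
  have hψK : ∀ w ∈ K, 0 < ψ w :=
    fun w hw => convexHull_min hψS (convex_halfSpace_gt ψ.toLinearMap.isLinear 0) hw
  obtain ⟨w₀, hw₀, hmin⟩ := hS.convexHull.exists_isMinOn hSne.convexHull ψ.continuous.continuousOn
  set δ := ψ w₀
  have hδ : 0 < δ := hψK w₀ hw₀
  rw [Submodule.coe_sup, coe_ofSubmodule, coe_hull_eq_Ici_smul_convexHull hSne]
  refine isClosed_of_closure_subset fun x hx => ?_
  set R := ψ x / δ + 1
  have hbounded :
      {z | ψ z < R * δ} ∩ ((V : Set E) + Ici (0 : ℝ) • K) ⊆ (V : Set E) + Icc 0 R • K := by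
    rintro _ ⟨hz, v, hv, _, ⟨r, hr, w, hw, rfl⟩, rfl⟩
    refine ⟨v, hv, r • w, ⟨r, ⟨hr, ?_⟩, w, hw, rfl⟩, rfl⟩
    have : r * δ ≤ r * ψ w := mul_le_mul_of_nonneg_left (hmin hw) hr
    simp only [mem_ofPred_eq, map_add, hψV v hv, map_smul, smul_eq_mul, zero_add] at hz
    nlinarith
  have hxR : x ∈ {z | ψ z < R * δ} := by
    change ψ x < (ψ x / δ + 1) * δ
    rw [add_mul, div_mul_cancel₀ _ hδ.ne']
    linarith
  have hclosed : IsClosed ((V : Set E) + Icc (0 : ℝ) R • K) :=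
    V.closed_of_finiteDimensional.add_right_of_isCompact (isCompact_Icc.smul_set hS.convexHull)
  have := closure_mono hbounded
    ((isOpen_lt ψ.continuous continuous_const).inter_closure ⟨hxR, hx⟩)
  exact add_subset_add_left (smul_subset_smul_right Icc_subset_Ici_self) (hclosed.closure_eq ▸ this)

end ConvexGeometry


namespace SemiInfiniteLP

variable {α ι : Type*} (Y : Set α) (a : α → ι → ℝ) (c : α → ℝ) (p b : ι → ℝ)

def momentCone [MeasurableSpace α] : PointedCone ℝ ((ι → ℝ) × ℝ) where
  carrier := {x | ∃ Λ : Measure α, IsFiniteMeasure Λ ∧ (∀ ℓ, IntegrableOn (fun y => a y ℓ) Y Λ) ∧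
    IntegrableOn c Y Λ ∧ (∀ ℓ, ∫ y in Y, a y ℓ ∂Λ = x.1 ℓ) ∧ -∫ y in Y, c y ∂Λ ≤ x.2}
  add_mem' := by
    rintro x x' ⟨Λ, _, ha, hc, hx₁, hx₂⟩ ⟨Λ', _, ha', hc', hx₁', hx₂'⟩
    refine ⟨Λ + Λ', inferInstance, fun ℓ => (ha ℓ).add_measure (ha' ℓ), hc.add_measure hc',
      fun ℓ => ?_, ?_⟩
    · rw [Measure.restrict_add, integral_add_measure (ha ℓ) (ha' ℓ), hx₁, hx₁']
      rfl
    · rw [Measure.restrict_add, integral_add_measure hc hc', Prod.snd_add]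
      linarith
  zero_mem' :=
    ⟨0, inferInstance, fun _ => by simp [IntegrableOn], by simp [IntegrableOn], by simp, by simp⟩
  smul_mem' := by
    rintro ⟨r, hr⟩ x ⟨Λ, _, ha, hc, hx₁, hx₂⟩
    have hint (f : α → ℝ) : ∫ y in Y, f y ∂(r.toNNReal • Λ) = r * ∫ y in Y, f y ∂Λ := by
      rw [Measure.restrict_smul, integral_smul_nnreal_measure, NNReal.smul_def,
        Real.coe_toNNReal r hr, smul_eq_mul]
    refine ⟨r.toNNReal • Λ, inferInstance, fun ℓ => ?_, ?_, fun ℓ => ?_, ?_⟩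
    · rw [IntegrableOn, Measure.restrict_smul]
      exact (ha ℓ).smul_measure_nnreal
    · rw [IntegrableOn, Measure.restrict_smul]
      exact hc.smul_measure_nnreal
    · rw [hint, hx₁ ℓ]
      rfl
    · rw [hint]
      change -(r * _) ≤ r * x.2
      nlinarith

def constraintSpan : Submodule ℝ ((ι → ℝ) × ℝ) :=
  Submodule.span ℝ {(fun _ => 1, 0), (p, -1)}

def constraintPoints : Set ((ι → ℝ) × ℝ) :=
  insert (0, 1) ((fun y => (a y, -c y)) '' Y)

theorem constraintPoints_subset_momentCone [MeasurableSpace α] [MeasurableSingletonClass α] :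
    constraintPoints Y a c ⊆ momentCone Y a c := by
  classical
  rintro _ (rfl | ⟨y, hy, rfl⟩)
  · exact ⟨0, inferInstance, fun _ => by simp [IntegrableOn], by simp [IntegrableOn], by simp,
      by simp⟩
  · have hdirac (f : α → ℝ) : IntegrableOn f Y (.dirac y) ∧ ∫ y' in Y, f y' ∂.dirac y = f y := by
      rw [IntegrableOn, restrict_dirac, if_pos hy, integral_dirac]
      exact ⟨integrable_dirac enorm_lt_top, rfl⟩
    exact ⟨.dirac y, inferInstance, fun ℓ => (hdirac _).1, (hdirac c).1, fun ℓ => (hdirac _).2,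
      (hdirac c).2 ▸ le_rfl⟩

theorem isCompact_constraintPoints [TopologicalSpace α] (hY : IsCompact Y) (ha : ContinuousOn a Y)
    (hc : ContinuousOn c Y) : IsCompact (constraintPoints Y a c) :=
  (hY.image_of_continuousOn (ha.prodMk hc.neg)).insert _

def constraintCone : PointedCone ℝ ((ι → ℝ) × ℝ) :=
  (constraintSpan p : PointedCone ℝ ((ι → ℝ) × ℝ)) ⊔ PointedCone.hull ℝ (constraintPoints Y a c)

def dualValues [MeasurableSpace α] : Set ℝ :=
  {v | ∃ Λ : Measure α, IsFiniteMeasure Λ ∧ ∃ l₁ l₂ : ℝ,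
    (∀ ℓ, IntegrableOn (fun y => a y ℓ) Y Λ) ∧ IntegrableOn c Y Λ ∧
    (∀ ℓ, l₁ + l₂ * p ℓ - (∫ y in Y, a y ℓ ∂Λ) - b ℓ = 0) ∧ v = (∫ y in Y, c y ∂Λ) - l₂}

theorem exists_mem_dualValues_le [MeasurableSpace α] [MeasurableSingletonClass α] {t : ℝ}
    (h : (-b, -t) ∈ constraintCone Y a c p) : ∃ d ∈ dualValues Y a c p b, t ≤ d := by
  obtain ⟨v, hv, m, hm, hvm⟩ := Submodule.mem_sup.1 h
  obtain ⟨Λ, hΛ, ha, hc, hm₁, hm₂⟩ :=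
    Submodule.span_le.2 (constraintPoints_subset_momentCone Y a c) hm
  obtain ⟨l₁, l₂, rfl⟩ := Submodule.mem_span_pair.1 hv
  refine ⟨∫ y in Y, c y ∂Λ + l₂, ⟨Λ, hΛ, -l₁, -l₂, ha, hc, fun ℓ => ?_, by ring⟩, ?_⟩
  · have := congrFun (congrArg Prod.fst hvm) ℓ
    simp only [Prod.fst_add, Prod.smul_fst, Pi.add_apply, Pi.smul_apply, smul_eq_mul, Pi.neg_apply,
      mul_one] at this
    rw [hm₁]
    linarith
  · have := congrArg Prod.snd hvm
    simp only [Prod.snd_add, Prod.smul_snd, smul_eq_mul, mul_zero, mul_neg, mul_one,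
      zero_add] at this
    linarith

variable [Fintype ι]

def pairing (γ : ι → ℝ) (β : ℝ) : StrongDual ℝ ((ι → ℝ) × ℝ) :=
  ∑ ℓ, γ ℓ • (ContinuousLinearMap.proj ℓ).comp (ContinuousLinearMap.fst ℝ (ι → ℝ) ℝ) +
    β • ContinuousLinearMap.snd ℝ (ι → ℝ) ℝ

@[simp]
theorem pairing_apply (γ : ι → ℝ) (β : ℝ) (x : (ι → ℝ) × ℝ) :
    pairing γ β x = ∑ ℓ, x.1 ℓ * γ ℓ + x.2 * β := by
  simp [pairing, mul_comm]

theorem eq_pairing [DecidableEq ι] (f : StrongDual ℝ ((ι → ℝ) × ℝ)) :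
    f = pairing (fun ℓ => f (Pi.single ℓ 1, 0)) (f (0, 1)) := by
  ext v
  · have hsingle (i : ι) : (Pi.single i 1 : ι → ℝ) = fun j => if i = j then 1 else 0 :=
      funext fun j => by simp [Pi.single_apply, eq_comm]
    simpa [hsingle, mul_comm] using
      LinearMap.pi_apply_eq_sum_univ (f ∘L ContinuousLinearMap.inl ℝ (ι → ℝ) ℝ).toLinearMap v
  · simp

theorem pairing_eq_zero_on_constraintSpan_iff {γ : ι → ℝ} {β : ℝ} :
    (∀ v ∈ constraintSpan p, pairing γ β v = 0) ↔ ∑ ℓ, γ ℓ = 0 ∧ ∑ ℓ, γ ℓ * p ℓ = β := by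
  change constraintSpan p ≤ LinearMap.ker (pairing γ β).toLinearMap ↔ _
  rw [constraintSpan, Submodule.span_le, pair_subset_iff]
  simp [mul_comm, add_neg_eq_zero]

theorem forall_constraintPoints_pairing_iff {P : ℝ → Prop} {γ : ι → ℝ} {β : ℝ} :
    (∀ x ∈ constraintPoints Y a c, P (pairing γ β x)) ↔
      P β ∧ ∀ y ∈ Y, P (∑ ℓ, a y ℓ * γ ℓ - c y * β) := by
  simp [constraintPoints, sub_eq_add_neg]

def primalValues : Set ℝ :=
  {v | ∃ g : ι → ℝ, (∑ ℓ, g ℓ) = 0 ∧ (∑ ℓ, g ℓ * p ℓ) = 1 ∧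
    (∀ y ∈ Y, c y ≤ ∑ ℓ, a y ℓ * g ℓ) ∧ v = -∑ ℓ, b ℓ * g ℓ}

theorem dual_le_primal [MeasurableSpace α] (hY : MeasurableSet Y) {d v : ℝ}
    (hd : d ∈ dualValues Y a c p b) (hv : v ∈ primalValues Y a c p b) : d ≤ v := by
  obtain ⟨Λ, _, l₁, l₂, ha, hc, hb, rfl⟩ := hd
  obtain ⟨g, hg₀, hg₁, hgY, rfl⟩ := hv
  set A := fun ℓ => ∫ y in Y, a y ℓ ∂Λ
  have hbg : ∑ ℓ, b ℓ * g ℓ = l₁ * ∑ ℓ, g ℓ + l₂ * ∑ ℓ, g ℓ * p ℓ - ∑ ℓ, A ℓ * g ℓ := by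
    rw [Finset.mul_sum, Finset.mul_sum, ← Finset.sum_add_distrib, ← Finset.sum_sub_distrib]
    exact Finset.sum_congr rfl fun ℓ _ => by rw [← sub_eq_zero.1 (hb ℓ)]; ring
  have hint : ∫ y in Y, c y ∂Λ ≤ ∑ ℓ, A ℓ * g ℓ := by
    have hsum := integral_finsetSum (μ := Λ.restrict Y) Finset.univ
      fun ℓ _ => (ha ℓ).mul_const (g ℓ)
    simp only [integral_mul_const] at hsum
    exact hsum ▸ setIntegral_mono_on hc (integrable_finsetSum _ fun ℓ _ => (ha ℓ).mul_const _)
      hY hgY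
  rw [hbg, hg₀, hg₁]
  linarith

theorem not_bddBelow_primalValues (hP : (primalValues Y a c p b).Nonempty) {γ : ι → ℝ}
    (h₀ : ∑ ℓ, γ ℓ = 0) (h₁ : ∑ ℓ, γ ℓ * p ℓ = 0) (hY : ∀ y ∈ Y, 0 ≤ ∑ ℓ, a y ℓ * γ ℓ)
    (hb : 0 < ∑ ℓ, b ℓ * γ ℓ) : ¬BddBelow (primalValues Y a c p b) := by
  obtain ⟨_, g, hg₀, hg₁, hgY, rfl⟩ := hP
  refine not_bddBelow_iff.2 fun x => ?_
  set m := |-∑ ℓ, b ℓ * g ℓ - x| / ∑ ℓ, b ℓ * γ ℓ + 1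
  have hm : 0 ≤ m := by positivity
  have hlin (w : ι → ℝ) :
      ∑ ℓ, w ℓ * (g ℓ + m * γ ℓ) = ∑ ℓ, w ℓ * g ℓ + m * ∑ ℓ, w ℓ * γ ℓ := by
    rw [Finset.mul_sum, ← Finset.sum_add_distrib]
    exact Finset.sum_congr rfl fun ℓ _ => by ring
  have hlin' (w : ι → ℝ) :
      ∑ ℓ, (g ℓ + m * γ ℓ) * w ℓ = ∑ ℓ, g ℓ * w ℓ + m * ∑ ℓ, γ ℓ * w ℓ := by
    simpa only [mul_comm] using hlin w
  refine ⟨_, ⟨fun ℓ => g ℓ + m * γ ℓ, ?_, ?_, fun y hy => ?_, rfl⟩, ?_⟩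
  · simp [Finset.sum_add_distrib, ← Finset.mul_sum, hg₀, h₀]
  · rw [hlin', hg₁, h₁, mul_zero, add_zero]
  · rw [hlin]
    nlinarith [hgY y hy, hY y hy]
  · rw [hlin]
    have : |-∑ ℓ, b ℓ * g ℓ - x| < m * ∑ ℓ, b ℓ * γ ℓ := by
      rw [add_mul, div_mul_cancel₀ _ hb.ne']
      linarith
    linarith [le_abs_self (-∑ ℓ, b ℓ * g ℓ - x)]

theorem sInf_primalValues_lt (hP : (primalValues Y a c p b).Nonempty)
    (hbdd : BddBelow (primalValues Y a c p b)) {γ : ι → ℝ} {β t : ℝ} (h₀ : ∑ ℓ, γ ℓ = 0)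
    (h₁ : ∑ ℓ, γ ℓ * p ℓ = β) (hβ : 0 ≤ β) (hY : ∀ y ∈ Y, 0 ≤ ∑ ℓ, a y ℓ * γ ℓ - c y * β)
    (ht : 0 < ∑ ℓ, b ℓ * γ ℓ + t * β) : sInf (primalValues Y a c p b) < t := by
  rcases hβ.eq_or_lt with rfl | hβ
  · exact absurd hbdd (not_bddBelow_primalValues Y a c p b hP h₀ h₁ (by simpa using hY)
      (by simpa using ht))
  have hdiv (w : ι → ℝ) : ∑ ℓ, w ℓ * (γ ℓ / β) = (∑ ℓ, w ℓ * γ ℓ) / β := by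
    rw [Finset.sum_div]
    exact Finset.sum_congr rfl fun ℓ _ => mul_div_assoc' _ _ _
  have hmem : -(∑ ℓ, b ℓ * γ ℓ) / β ∈ primalValues Y a c p b := by
    refine ⟨fun ℓ => γ ℓ / β, ?_, ?_, fun y hy => ?_, by rw [hdiv, neg_div]⟩
    · rw [← Finset.sum_div, h₀, zero_div]
    · simp only [div_mul_eq_mul_div, ← Finset.sum_div, h₁, div_self hβ.ne']
    · rw [hdiv, le_div_iff₀ hβ]
      linarith [hY y hy]
  calc sInf (primalValues Y a c p b) ≤ -(∑ ℓ, b ℓ * γ ℓ) / β := csInf_le hbdd hmem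
    _ < t := by rw [div_lt_iff₀ hβ]; linarith

theorem isClosed_constraintCone [TopologicalSpace α] (hY : IsCompact Y)
    (ha : ContinuousOn a Y) (hc : ContinuousOn c Y) {γ₀ : ι → ℝ} (h₀ : ∑ ℓ, γ₀ ℓ = 0)
    (h₁ : ∑ ℓ, γ₀ ℓ * p ℓ = 1) (hslater : ∀ y ∈ Y, c y < ∑ ℓ, a y ℓ * γ₀ ℓ) :
    IsClosed (constraintCone Y a c p : Set ((ι → ℝ) × ℝ)) :=
  PointedCone.isClosed_sup_hull _ (isCompact_constraintPoints Y a c hY ha hc)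
    (insert_nonempty _ _) (ψ := pairing γ₀ 1)
    ((pairing_eq_zero_on_constraintSpan_iff p).2 ⟨h₀, h₁⟩)
    ((forall_constraintPoints_pairing_iff Y a c).2
      ⟨one_pos, fun y hy => by linarith [hslater y hy]⟩)

theorem mem_constraintCone_of_lt_sInf
    (hclosed : IsClosed (constraintCone Y a c p : Set ((ι → ℝ) × ℝ)))
    (hP : (primalValues Y a c p b).Nonempty) (hbdd : BddBelow (primalValues Y a c p b))
    {t : ℝ} (ht : t < sInf (primalValues Y a c p b)) : (-b, -t) ∈ constraintCone Y a c p := by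
  classical
  by_contra hnot
  obtain ⟨f, hf, hft⟩ := ProperCone.hyperplane_separation_point ⟨_, hclosed⟩ hnot
  rw [eq_pairing f] at hf hft
  set γ := fun ℓ => f (Pi.single ℓ 1, 0)
  set β := f (0, 1)
  have hV : ∀ v ∈ constraintSpan p, pairing γ β v = 0 := fun v hv =>
    le_antisymm
      (by simpa only [map_neg, neg_nonneg] using
        hf (-v) (Submodule.mem_sup_left ((constraintSpan p).neg_mem hv)))
      (hf v (Submodule.mem_sup_left hv))
  obtain ⟨hγ₀, hγ₁⟩ := (pairing_eq_zero_on_constraintSpan_iff p).1 hV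
  obtain ⟨hβ, hγY⟩ := (forall_constraintPoints_pairing_iff Y a c).1 fun x hx =>
    hf x (Submodule.mem_sup_right (PointedCone.subset_hull hx))
  simp only [pairing_apply, Pi.neg_apply, neg_mul, Finset.sum_neg_distrib] at hft
  exact (sInf_primalValues_lt Y a c p b hP hbdd hγ₀ hγ₁ hβ hγY (by linarith)).not_gt ht

end SemiInfiniteLP

open SemiInfiniteLP in
theorem strong_duality_semi_infinite_LP_general
    (L : ℕ) (Ycal : Set ℝ) (ybar : ℝ)
    (pvec : ℝ → ℕ → Fin L → ℝ) (pcond : ℝ → ℕ → ℝ) (pz : Fin L → ℝ)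
    -- 𝒴 compact, data continuous on 𝒴
    (hYcomp : IsCompact Ycal)
    (hcont1 : ContinuousOn (fun y => pcond y 1) Ycal)
    (hcontv : ∀ ℓ : Fin L, ContinuousOn (fun y => pvec y 1 ℓ) Ycal)
    -- Slater point: a strictly feasible γ*
    (γstar : Fin L → ℝ)
    (hγstar0 : (∑ ℓ, γstar ℓ) = 0) (hγstar1 : (∑ ℓ, γstar ℓ * pz ℓ) = 1)
    (hslater : ∀ y ∈ Ycal, pcond y 1 < ∑ ℓ, pvec y 1 ℓ * γstar ℓ)
    -- the primal optimal value is finite (the primal value set is bounded below)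
    (hfinite : BddBelow {v : ℝ | ∃ g : Fin L → ℝ,
      (∑ ℓ, g ℓ) = 0 ∧ (∑ ℓ, g ℓ * pz ℓ) = 1 ∧
      (∀ y ∈ Ycal, pcond y 1 ≤ ∑ ℓ, pvec y 1 ℓ * g ℓ) ∧
      v = -∑ ℓ, pvec ybar 0 ℓ * g ℓ}) :
    -- strong duality: the dual optimal value equals the primal optimal value
    sSup {v : ℝ | ∃ Λ' : Measure ℝ, IsFiniteMeasure Λ' ∧
        ∃ l1 l2 : ℝ,
          (∀ ℓ, IntegrableOn (fun y => pvec y 1 ℓ) Ycal Λ') ∧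
          IntegrableOn (fun y => pcond y 1) Ycal Λ' ∧
          (∀ ℓ : Fin L,
            l1 + l2 * pz ℓ - (∫ y in Ycal, pvec y 1 ℓ ∂Λ') - pvec ybar 0 ℓ = 0) ∧
          v = (∫ y in Ycal, pcond y 1 ∂Λ') - l2}
      = sInf {v : ℝ | ∃ g : Fin L → ℝ,
          (∑ ℓ, g ℓ) = 0 ∧ (∑ ℓ, g ℓ * pz ℓ) = 1 ∧
          (∀ y ∈ Ycal, pcond y 1 ≤ ∑ ℓ, pvec y 1 ℓ * g ℓ) ∧
          v = -∑ ℓ, pvec ybar 0 ℓ * g ℓ} := by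
  set a : ℝ → Fin L → ℝ := fun y => pvec y 1
  set c : ℝ → ℝ := fun y => pcond y 1
  set b : Fin L → ℝ := pvec ybar 0
  change sSup (dualValues Ycal a c pz b) = sInf (primalValues Ycal a c pz b)
  change BddBelow (primalValues Ycal a c pz b) at hfinite
  set P := primalValues Ycal a c pz b
  have hP : P.Nonempty := ⟨_, γstar, hγstar0, hγstar1, fun y hy => (hslater y hy).le, rfl⟩
  have hclosed := isClosed_constraintCone Ycal a c pz hYcomp (continuousOn_pi.2 hcontv) hcont1
    hγstar0 hγstar1 hslater
  have hdual (t : ℝ) (ht : t < sInf P) : ∃ d ∈ dualValues Ycal a c pz b, t ≤ d :=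
    exists_mem_dualValues_le Ycal a c pz b (mem_constraintCone_of_lt_sInf Ycal a c pz b hclosed hP
      hfinite ht)
  refine csSup_eq_of_forall_le_of_forall_lt_exists_gt ?_
    (fun d hd => le_csInf hP fun v hv =>
      dual_le_primal Ycal a c pz b hYcomp.isClosed.measurableSet hd hv) fun w hw => ?_
  · obtain ⟨d, hd, -⟩ := hdual (sInf P - 1) (by linarith)
    exact ⟨d, hd⟩
  · obtain ⟨d, hd, hd'⟩ := hdual ((w + sInf P) / 2) (by linarith)
    exact ⟨d, hd, by linarith⟩

/-- Theorem (strong duality) for the semi-infinite linear program bounding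
`P[Y₀ ≤ ȳ | D = 1]`: under compactness of 𝒴, continuity of the data, and a Slater
condition, the dual optimal value equals the primal optimal value.  Here
`pvec y d ℓ = P[Y ≤ y, D = d | Z = z_ℓ]`, `pcond y d = P[Y ≤ y | D = d]` and
`pz ℓ = P[D = 1 | Z = z_ℓ]`. -/
theorem strong_duality_semi_infinite_LP
    (L : ℕ) (Ycal : Set ℝ) (ybar : ℝ) (hybar : ybar ∈ Ycal)
    (pvec : ℝ → ℕ → Fin L → ℝ) (pcond : ℝ → ℕ → ℝ) (pz : Fin L → ℝ)
    -- 𝒴 compact, data continuous on 𝒴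
    (hYcomp : IsCompact Ycal)
    (hcont1 : ContinuousOn (fun y => pcond y 1) Ycal)
    (hcontv : ∀ ℓ : Fin L, ContinuousOn (fun y => pvec y 1 ℓ) Ycal)
    -- Slater point: a strictly feasible γ*
    (γstar : Fin L → ℝ)
    (hγstar0 : (∑ ℓ, γstar ℓ) = 0) (hγstar1 : (∑ ℓ, γstar ℓ * pz ℓ) = 1)
    (hslater : ∀ y ∈ Ycal, pcond y 1 < ∑ ℓ, pvec y 1 ℓ * γstar ℓ)
    -- the primal optimal value is finite (the primal value set is bounded below)
    (hfinite : BddBelow {v : ℝ | ∃ g : Fin L → ℝ,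
      (∑ ℓ, g ℓ) = 0 ∧ (∑ ℓ, g ℓ * pz ℓ) = 1 ∧
      (∀ y ∈ Ycal, pcond y 1 ≤ ∑ ℓ, pvec y 1 ℓ * g ℓ) ∧
      v = -∑ ℓ, pvec ybar 0 ℓ * g ℓ}) :
    -- strong duality: the dual optimal value equals the primal optimal value
    sSup {v : ℝ | ∃ Λ' : Measure ℝ, IsFiniteMeasure Λ' ∧
        ∃ l1 l2 : ℝ,
          (∀ ℓ, IntegrableOn (fun y => pvec y 1 ℓ) Ycal Λ') ∧
          IntegrableOn (fun y => pcond y 1) Ycal Λ' ∧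
          (∀ ℓ : Fin L,
            l1 + l2 * pz ℓ - (∫ y in Ycal, pvec y 1 ℓ ∂Λ') - pvec ybar 0 ℓ = 0) ∧
          v = (∫ y in Ycal, pcond y 1 ∂Λ') - l2}
      = sInf {v : ℝ | ∃ g : Fin L → ℝ,
          (∑ ℓ, g ℓ) = 0 ∧ (∑ ℓ, g ℓ * pz ℓ) = 1 ∧
          (∀ y ∈ Ycal, pcond y 1 ≤ ∑ ℓ, pvec y 1 ℓ * g ℓ) ∧
          v = -∑ ℓ, pvec ybar 0 ℓ * g ℓ} :=
  strong_duality_semi_infinite_LP_general L Ycal ybar pvec pcond pz hYcomp hcont1 hcontv γstar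
    hγstar0 hγstar1 hslater hfinite
end

section
/- Suppose Y = q(D, U_D) with q(d, ·) strictly increasing and U_D = D·U1 + (1−D)·U0, and let T := (D_{z_1},...,D_{z_L}) with D = D_Z. Assume T-rank similarity, i.e., the conditional distribution of U1 given (T, Z) equals the conditional distribution of U0 given (T, Z), and assume U0 is independent of Z with P[U0 ≤ τ] = τ for all τ ∈ (0,1). Then for every τ ∈ (0,1) and every value z of Z, P[Y ≤ q(D, τ) | Z = z] = τ. -/
open MeasureTheory ProbabilityTheory Filter Set

section aux
variable {Ω : Type*} [MeasurableSpace Ω] (μ : Measure Ω) [IsProbabilityMeasure μ]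

lemma pr_union_disjoint {A B : Set Ω} (hB : MeasurableSet B)
    (hd : Disjoint A B) : pr μ (A ∪ B) = pr μ A + pr μ B := by
  unfold pr
  rw [measure_union hd hB, ENNReal.toReal_add (measure_ne_top μ A) (measure_ne_top μ B)]

end aux

/-- Testable implication of rank similarity with respect to the compliance type
`T = (D_{z_1},…,D_{z_L})`: if the conditional distribution of U₁ given (T, Z) equals
that of U₀ given (T, Z) (encoded as equality of the joint probabilities), U₀ ⊥ Z and
`P[U₀ ≤ τ] = τ` on (0,1), then `P[Y ≤ q(D, τ) | Z = z] = τ` for all τ ∈ (0,1) and z. -/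
theorem rank_similarity_testable_implication
    {Ω : Type*} [MeasurableSpace Ω] (μ : Measure Ω) [IsProbabilityMeasure μ]
    (L : ℕ) [NeZero L]
    (U0 U1 : Ω → ℝ) (q : ℕ → ℝ → ℝ)
    (Dz : Fin L → Ω → ℕ) (Z : Ω → Fin L) (D : Ω → ℕ) (Y : Ω → ℝ)
    (hmU0 : Measurable U0) (hmU1 : Measurable U1) (hmZ : Measurable Z)
    (hmDz : ∀ ℓ, Measurable (Dz ℓ))
    (hq : ∀ d, StrictMono (q d))
    (hDz01 : ∀ ℓ ω, Dz ℓ ω = 0 ∨ Dz ℓ ω = 1)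
    (hD : ∀ ω, D ω = Dz (Z ω) ω)
    (hYobs : ∀ ω, Y ω = q (D ω) (if D ω = 1 then U1 ω else U0 ω))
    (hZpos : ∀ ℓ : Fin L, 0 < pr μ {ω | Z ω = ℓ})
    -- T-rank similarity: U₁ | (T, Z)  =ᵈ  U₀ | (T, Z)
    (hranksim : ∀ (u : ℝ) (t : Fin L → ℕ) (ℓ : Fin L),
      pr μ {ω | U1 ω ≤ u ∧ (∀ j, Dz j ω = t j) ∧ Z ω = ℓ}
        = pr μ {ω | U0 ω ≤ u ∧ (∀ j, Dz j ω = t j) ∧ Z ω = ℓ})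
    -- U₀ ⊥ Z, with U₀ uniformly distributed: P[U₀ ≤ τ] = τ on (0,1)
    (hU0indep : IndepFun U0 Z μ)
    (hU0unif : ∀ τ ∈ Set.Ioo (0 : ℝ) 1, pr μ {ω | U0 ω ≤ τ} = τ) :
    ∀ τ ∈ Set.Ioo (0 : ℝ) 1, ∀ ℓ : Fin L,
      cpr μ {ω | Y ω ≤ q (D ω) τ} {ω | Z ω = ℓ} = τ := by
  intro τ hτ ℓ
  have hZm : MeasurableSet {ω | Z ω = ℓ} := hmZ (measurableSet_singleton ℓ)
  have hmeas : ∀ (U : Ω → ℝ), Measurable U → ∀ t : Fin L → Fin 2,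
      MeasurableSet {ω | U ω ≤ τ ∧ (∀ j, Dz j ω = (t j : ℕ)) ∧ Z ω = ℓ} := by
    intro U hmU t
    have h : {ω | U ω ≤ τ ∧ (∀ j, Dz j ω = (t j : ℕ)) ∧ Z ω = ℓ}
        = (U ⁻¹' Iic τ) ∩ ((⋂ j, Dz j ⁻¹' {(t j : ℕ)}) ∩ Z ⁻¹' {ℓ}) := by
      ext ω; simp [Set.mem_iInter]
    rw [h]
    exact (hmU measurableSet_Iic).inter
      ((MeasurableSet.iInter fun j => hmDz j (measurableSet_singleton _)).inter hZm)
  -- partition an event by compliance type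
  have key : ∀ (U : Ω → ℝ), Measurable U → ∀ b : ℕ,
      pr μ {ω | U ω ≤ τ ∧ Dz ℓ ω = b ∧ Z ω = ℓ}
        = ∑ t ∈ Finset.univ.filter (fun t : Fin L → Fin 2 => (t ℓ : ℕ) = b),
            pr μ {ω | U ω ≤ τ ∧ (∀ j, Dz j ω = (t j : ℕ)) ∧ Z ω = ℓ} := by
    intro U hmU b
    have hunion : {ω | U ω ≤ τ ∧ Dz ℓ ω = b ∧ Z ω = ℓ}
        = ⋃ t ∈ Finset.univ.filter (fun t : Fin L → Fin 2 => (t ℓ : ℕ) = b),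
            {ω | U ω ≤ τ ∧ (∀ j, Dz j ω = (t j : ℕ)) ∧ Z ω = ℓ} := by
      ext ω
      simp only [mem_setOf_eq, mem_iUnion, Finset.mem_filter, Finset.mem_univ, true_and,
        exists_prop]
      constructor
      · rintro ⟨hu, hd, hz⟩
        refine ⟨fun j => if Dz j ω = 1 then 1 else 0, ?_, hu, ?_, hz⟩
        · rcases hDz01 ℓ ω with h | h <;> rw [h] at hd <;> simp [h, ← hd]
        · intro j; rcases hDz01 j ω with h | h <;> simp [h]
      · rintro ⟨t, ht, hu, hd, hz⟩
        exact ⟨hu, by rw [hd ℓ, ht], hz⟩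
    rw [hunion]
    unfold pr
    rw [measure_biUnion_finset ?_ (fun t _ => hmeas U hmU t),
      ENNReal.toReal_sum (fun t _ => measure_ne_top μ _)]
    intro t _ t' _ hne
    simp only [Function.onFun, Set.disjoint_left]
    rintro ω ⟨_, hd, _⟩ ⟨_, hd', _⟩
    exact hne (funext fun j => Fin.val_injective ((hd j).symm.trans (hd' j)))
  -- the numerator event
  have hset : {ω | Y ω ≤ q (D ω) τ} ∩ {ω | Z ω = ℓ}
      = {ω | U1 ω ≤ τ ∧ Dz ℓ ω = 1 ∧ Z ω = ℓ} ∪ {ω | U0 ω ≤ τ ∧ Dz ℓ ω = 0 ∧ Z ω = ℓ} := by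
    ext ω
    simp only [mem_inter_iff, mem_setOf_eq, mem_union]
    constructor
    · rintro ⟨hy, hz⟩
      have hD' : D ω = Dz ℓ ω := by rw [hD ω, hz]
      rw [hYobs ω, (hq (D ω)).le_iff_le] at hy
      rcases hDz01 ℓ ω with h | h
      · right; rw [hD', h] at hy; simp at hy; exact ⟨hy, h, hz⟩
      · left; rw [hD', h] at hy; simp at hy; exact ⟨hy, h, hz⟩
    · rintro (⟨hu, hd, hz⟩ | ⟨hu, hd, hz⟩) <;>
      · have hD' : D ω = Dz ℓ ω := by rw [hD ω, hz]
        refine ⟨?_, hz⟩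
        rw [hYobs ω, (hq (D ω)).le_iff_le, hD', hd]
        simpa using hu
  have hd01 : Disjoint {ω | U1 ω ≤ τ ∧ Dz ℓ ω = 1 ∧ Z ω = ℓ}
      {ω | U0 ω ≤ τ ∧ Dz ℓ ω = 0 ∧ Z ω = ℓ} := by
    rw [Set.disjoint_left]
    rintro ω ⟨_, h1, _⟩ ⟨_, h0, _⟩
    omega
  have hd01' : Disjoint {ω | U0 ω ≤ τ ∧ Dz ℓ ω = 1 ∧ Z ω = ℓ}
      {ω | U0 ω ≤ τ ∧ Dz ℓ ω = 0 ∧ Z ω = ℓ} := by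
    rw [Set.disjoint_left]
    rintro ω ⟨_, h1, _⟩ ⟨_, h0, _⟩
    omega
  have hmb : ∀ (U : Ω → ℝ), Measurable U → ∀ b : ℕ,
      MeasurableSet {ω | U ω ≤ τ ∧ Dz ℓ ω = b ∧ Z ω = ℓ} := by
    intro U hmU b
    have h : {ω | U ω ≤ τ ∧ Dz ℓ ω = b ∧ Z ω = ℓ}
        = (U ⁻¹' Iic τ) ∩ (Dz ℓ ⁻¹' {b} ∩ Z ⁻¹' {ℓ}) := by
      ext ω; simp
    rw [h]
    exact (hmU measurableSet_Iic).inter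
      ((hmDz ℓ (measurableSet_singleton _)).inter hZm)
  -- rank similarity transfer
  have htrans : pr μ {ω | U1 ω ≤ τ ∧ Dz ℓ ω = 1 ∧ Z ω = ℓ}
      = pr μ {ω | U0 ω ≤ τ ∧ Dz ℓ ω = 1 ∧ Z ω = ℓ} := by
    rw [key U1 hmU1 1, key U0 hmU0 1]
    exact Finset.sum_congr rfl fun t _ => hranksim τ (fun j => (t j : ℕ)) ℓ
  -- combine
  have hU0all : {ω | U0 ω ≤ τ ∧ Dz ℓ ω = 1 ∧ Z ω = ℓ}
      ∪ {ω | U0 ω ≤ τ ∧ Dz ℓ ω = 0 ∧ Z ω = ℓ} = {ω | U0 ω ≤ τ} ∩ {ω | Z ω = ℓ} := by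
    ext ω
    simp only [mem_union, mem_setOf_eq, mem_inter_iff]
    constructor
    · rintro (⟨h, _, hz⟩ | ⟨h, _, hz⟩) <;> exact ⟨h, hz⟩
    · rintro ⟨h, hz⟩
      rcases hDz01 ℓ ω with h0 | h1
      · right; exact ⟨h, h0, hz⟩
      · left; exact ⟨h, h1, hz⟩
  have hindep : pr μ ({ω | U0 ω ≤ τ} ∩ {ω | Z ω = ℓ})
      = τ * pr μ {ω | Z ω = ℓ} := by
    have h : {ω | U0 ω ≤ τ} ∩ {ω | Z ω = ℓ} = U0 ⁻¹' Iic τ ∩ Z ⁻¹' {ℓ} := by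
      ext ω; simp
    rw [h]
    unfold pr
    rw [hU0indep.measure_inter_preimage_eq_mul _ _ measurableSet_Iic
      (measurableSet_singleton ℓ), ENNReal.toReal_mul]
    show (μ (U0 ⁻¹' Iic τ)).toReal * (μ {ω | Z ω = ℓ}).toReal = _
    have : (μ (U0 ⁻¹' Iic τ)).toReal = τ := by
      have h2 : U0 ⁻¹' Iic τ = {ω | U0 ω ≤ τ} := by ext ω; simp
      rw [h2]; exact hU0unif τ hτ
    rw [this]
  have hnum : pr μ ({ω | Y ω ≤ q (D ω) τ} ∩ {ω | Z ω = ℓ}) = τ * pr μ {ω | Z ω = ℓ} := by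
    rw [hset, pr_union_disjoint μ (hmb U0 hmU0 0) hd01, htrans,
      ← pr_union_disjoint μ (hmb U0 hmU0 0) hd01', hU0all, hindep]
  unfold cpr
  rw [hnum, mul_div_assoc, div_self (ne_of_gt (hZpos ℓ)), mul_one]
end
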